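/- arXiv:math/9906154 — 5 statements merged into one kernel-verified Lean document; each statement's English description precedes it below -/
import Mathlib

section
/- Let n ≥ 1 and let π be a 132-avoiding permutation of {1,…,n} with π(k) = n. Then every value of π taken before position k is larger than every value taken after position k; consequently {π(1),…,π(k−1)} = {n−k+1,…,n−1} and {π(k+1),…,π(n)} = {1,…,n−k}. Moreover the subsequence π₁ = (π(1),…,π(k−1)) and the subsequence π₂ = (π(k+1),…,π(n)) each contain no (132) pattern. -/
/-- `Avoids132 a` says the finite sequence `a` contains no (132) pattern,
i.e. no indices `i < j < k` with `a i < a k < a j`. -/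
def Avoids132 {m : ℕ} (a : Fin m → ℕ) : Prop :=
  ∀ i j k : Fin m, i < j → j < k → ¬ (a i < a k ∧ a k < a j)

/-- Let `n ≥ 1` and let `π` be a 132-avoiding permutation of `{1,…,n}`
(written as a bijective sequence `π : Fin n → ℕ`, position `i : Fin n`
being the `(i+1)`-st position) with the value `n` at position `k`.
Then every value taken before position `k` is larger than every value taken
after position `k`; the set of values before position `k` is
`{n-k, …, n-1}` and the set of values after position `k` is `{1, …, n-k-1}`
(in terms of the 1-indexed position `k+1` these are `{n-(k+1)+1, …, n-1}`
and `{1, …, n-(k+1)}`); and the subsequences of `π` strictly before and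
strictly after position `k` each contain no (132) pattern. -/
theorem stmt0 (n : ℕ) (hn : 1 ≤ n) (π : Fin n → ℕ)
    (hbij : Set.BijOn π Set.univ (Set.Icc 1 n))
    (havoid : Avoids132 π)
    (k : Fin n) (hk : π k = n) :
    (∀ i j : Fin n, i < k → k < j → π j < π i) ∧
    (π '' {i : Fin n | i < k} = Set.Icc (n - (k : ℕ)) (n - 1)) ∧
    (π '' {i : Fin n | k < i} = Set.Icc 1 (n - ((k : ℕ) + 1))) ∧
    Avoids132 (fun i : Fin (k : ℕ) => π ⟨i.1, lt_trans i.isLt k.isLt⟩) ∧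
    Avoids132 (fun i : Fin (n - (k : ℕ) - 1) =>
      π ⟨(k : ℕ) + 1 + i.1, by have := i.isLt; have := k.isLt; omega⟩) := by
  have hklt : (k : ℕ) < n := k.isLt
  haveI : Nonempty (Fin n) := ⟨⟨0, hn⟩⟩
  have hinj : Function.Injective π := fun a b h =>
    hbij.injOn (Set.mem_univ a) (Set.mem_univ b) h
  have hmem : ∀ i : Fin n, 1 ≤ π i ∧ π i ≤ n := by
    intro i
    have := hbij.mapsTo (Set.mem_univ i)
    simpa using this
  have hlt_n : ∀ i : Fin n, i ≠ k → π i < n := by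
    intro i hik
    rcases lt_or_eq_of_le (hmem i).2 with h | h
    · exact h
    · exact absurd (hinj (h.trans hk.symm)) hik
  -- Claim 1
  have h1 : ∀ i j : Fin n, i < k → k < j → π j < π i := by
    intro i j hik hkj
    by_contra h
    push_neg at h
    have hne : π i ≠ π j := fun e => (ne_of_lt (hik.trans hkj)) (hinj e)
    have hij : π i < π j := lt_of_le_of_ne h hne
    have hjn : π j < π k := by rw [hk]; exact hlt_n j (ne_of_gt hkj)
    exact havoid i k j hik hkj ⟨hij, hjn⟩
  set g : ℕ → Fin n := Function.invFun π with hg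
  have hsurj : ∀ x : ℕ, 1 ≤ x → x ≤ n → π (g x) = x := by
    intro x h1x h2x
    obtain ⟨a, -, ha⟩ := hbij.surjOn (Set.mem_Icc.mpr ⟨h1x, h2x⟩)
    exact Function.invFun_eq ⟨a, ha⟩
  -- bound 1 : values before k are at least n - k
  have hb1 : ∀ i : Fin n, i < k → n - (k : ℕ) ≤ π i := by
    intro i hik
    by_contra hcon
    push_neg at hcon
    have hx1 : 1 ≤ π i := (hmem i).1
    have hcard : (Finset.Icc (π i) n).card ≤ (Finset.Iic (k : ℕ)).card := by
      apply Finset.card_le_card_of_injOn (fun y => ((g y : Fin n) : ℕ))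
      · intro y hy
        rw [Finset.mem_coe, Finset.mem_Icc] at hy
        have hgy : π (g y) = y := hsurj y (hx1.trans hy.1) hy.2
        rw [Finset.mem_coe, Finset.mem_Iic]
        by_contra hgt
        push_neg at hgt
        have := h1 i (g y) hik (Fin.lt_def.mpr hgt)
        omega
      · intro a ha b hb hab
        rw [Finset.mem_coe, Finset.mem_Icc] at ha hb
        have hga : g a = g b := Fin.val_injective hab
        have := congrArg π hga
        rw [hsurj a (hx1.trans ha.1) ha.2, hsurj b (hx1.trans hb.1) hb.2] at this
        exact this
    rw [Nat.card_Icc, Nat.card_Iic] at hcard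
    omega
  -- bound 2 : values after k are less than n - k
  have hb2 : ∀ i : Fin n, k < i → π i < n - (k : ℕ) := by
    intro i hki
    by_contra hcon
    push_neg at hcon
    have hx2 : π i < n := hlt_n i (ne_of_gt hki)
    have hcard : (Finset.Iic k).card ≤ (Finset.Icc (π i + 1) n).card := by
      apply Finset.card_le_card_of_injOn π
      · intro j hj
        rw [Finset.mem_coe, Finset.mem_Iic] at hj
        rw [Finset.mem_coe, Finset.mem_Icc]
        rcases lt_or_eq_of_le hj with hjk | hjk
        · have := h1 j i hjk hki
          exact ⟨by omega, (hmem j).2⟩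
        · rw [hjk, hk]
          omega
      · intro a _ b _ hab
        exact hinj hab
    have hIic : (Finset.Iic k).card = (k : ℕ) + 1 := by simp
    rw [hIic, Nat.card_Icc] at hcard
    omega
  -- set equality A
  have hA : π '' {i : Fin n | i < k} = Set.Icc (n - (k : ℕ)) (n - 1) := by
    ext x
    constructor
    · rintro ⟨i, hi, rfl⟩
      have h2 := hlt_n i (ne_of_lt hi)
      exact Set.mem_Icc.mpr ⟨hb1 i hi, by omega⟩
    · intro hx
      rw [Set.mem_Icc] at hx
      have hx1 : 1 ≤ x := by omega
      have hx2 : x ≤ n := by omega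
      have hgx : π (g x) = x := hsurj x hx1 hx2
      rcases lt_trichotomy (g x) k with h | h | h
      · exact ⟨g x, h, hgx⟩
      · exfalso; rw [h, hk] at hgx; omega
      · exfalso; have := hb2 (g x) h; omega
  refine ⟨h1, hA, ?_, ?_, ?_⟩
  · -- set equality B
    ext x
    constructor
    · rintro ⟨i, hi, rfl⟩
      have := hb2 i hi
      exact Set.mem_Icc.mpr ⟨(hmem i).1, by omega⟩
    · intro hx
      rw [Set.mem_Icc] at hx
      have hx1 : 1 ≤ x := hx.1
      have hx2 : x ≤ n := by omega
      have hgx : π (g x) = x := hsurj x hx1 hx2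
      rcases lt_trichotomy (g x) k with h | h | h
      · exfalso; have := hb1 (g x) h; omega
      · exfalso; rw [h, hk] at hgx; omega
      · exact ⟨g x, h, hgx⟩
  · intro i j l hij hjl ⟨ha, hb⟩
    exact havoid ⟨i.1, lt_trans i.isLt k.isLt⟩ ⟨j.1, lt_trans j.isLt k.isLt⟩
      ⟨l.1, lt_trans l.isLt k.isLt⟩ (Fin.lt_def.mpr hij) (Fin.lt_def.mpr hjl) ⟨ha, hb⟩
  · intro i j l hij hjl ⟨ha, hb⟩
    have hi := i.isLt; have hj := j.isLt; have hl := l.isLt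
    have hij' : i.1 < j.1 := Fin.lt_def.mp hij
    have hjl' : j.1 < l.1 := Fin.lt_def.mp hjl
    exact havoid ⟨(k : ℕ) + 1 + i.1, by omega⟩ ⟨(k : ℕ) + 1 + j.1, by omega⟩
      ⟨(k : ℕ) + 1 + l.1, by omega⟩ (by simp only [Fin.mk_lt_mk]; omega)
      (by simp only [Fin.mk_lt_mk]; omega) ⟨ha, hb⟩
end

section
/- Let 1 ≤ k ≤ n, let π₁ be a 132-avoiding bijective sequence with values {n−k+1,…,n−1} and let π₂ be a 132-avoiding bijective sequence with values {1,…,n−k}. Then the concatenation π = (π₁, n, π₂) is a 132-avoiding permutation of {1,…,n}. -/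
/-- Let `1 ≤ k ≤ n`, let `π₁` be a 132-avoiding bijective sequence (of
length `k-1`) with values `{n-k+1, …, n-1}` and let `π₂` be a 132-avoiding
bijective sequence (of length `n-k`) with values `{1, …, n-k}`.  Then the
concatenation `π = (π₁, n, π₂)` (which places the value `n` at the
1-indexed position `k`) is a 132-avoiding permutation of `{1, …, n}`. -/
theorem stmt1 (n k : ℕ) (hk1 : 1 ≤ k) (hkn : k ≤ n)
    (π₁ : Fin (k - 1) → ℕ) (π₂ : Fin (n - k) → ℕ)
    (hbij1 : Set.BijOn π₁ Set.univ (Set.Icc (n - k + 1) (n - 1)))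
    (hbij2 : Set.BijOn π₂ Set.univ (Set.Icc 1 (n - k)))
    (havoid1 : Avoids132 π₁) (havoid2 : Avoids132 π₂)
    (π : Fin n → ℕ)
    (hπ : π = fun i : Fin n =>
      if h1 : i.1 + 1 < k then π₁ ⟨i.1, by omega⟩
      else if h2 : i.1 + 1 = k then n
      else π₂ ⟨i.1 - k, by have := i.isLt; omega⟩) :
    Set.BijOn π Set.univ (Set.Icc 1 n) ∧ Avoids132 π := by
  have hA : ∀ (i : Fin n) (h : i.1 + 1 < k), π i = π₁ ⟨i.1, by omega⟩ := by
    intro i h; rw [hπ]; simp [h]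
  have hB : ∀ (i : Fin n) (h : i.1 + 1 = k), π i = n := by
    intro i h
    have h1 : ¬ (i.1 + 1 < k) := by omega
    rw [hπ]; simp [h1, h]
  have hC : ∀ (i : Fin n) (h : k ≤ i.1), π i = π₂ ⟨i.1 - k, by have := i.isLt; omega⟩ := by
    intro i h
    have h1 : ¬ (i.1 + 1 < k) := by omega
    have h2 : ¬ (i.1 + 1 = k) := by omega
    rw [hπ]; simp [h1, h2]
  have b1 : ∀ x : Fin (k - 1), n - k + 1 ≤ π₁ x ∧ π₁ x ≤ n - 1 := by
    intro x
    have := hbij1.mapsTo (Set.mem_univ x)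
    exact Set.mem_Icc.mp this
  have b2 : ∀ x : Fin (n - k), 1 ≤ π₂ x ∧ π₂ x ≤ n - k := by
    intro x
    have := hbij2.mapsTo (Set.mem_univ x)
    exact Set.mem_Icc.mp this
  have vA : ∀ (i : Fin n), i.1 + 1 < k → n - k + 1 ≤ π i ∧ π i ≤ n - 1 := by
    intro i h; rw [hA i h]; exact b1 _
  have vC : ∀ (i : Fin n), k ≤ i.1 → 1 ≤ π i ∧ π i ≤ n - k := by
    intro i h; rw [hC i h]; exact b2 _
  have segs : ∀ p : Fin n, p.1 + 1 < k ∨ p.1 + 1 = k ∨ k ≤ p.1 := by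
    intro p; omega
  constructor
  · refine ⟨?_, ?_, ?_⟩
    · -- MapsTo
      intro i _
      rcases segs i with h | h | h
      · have := vA i h; exact Set.mem_Icc.mpr (by omega)
      · have := hB i h; exact Set.mem_Icc.mpr (by omega)
      · have := vC i h; exact Set.mem_Icc.mpr (by omega)
    · -- InjOn
      intro a _ b _ hab
      have key : a.1 = b.1 := by
        rcases segs a with ha | ha | ha <;> rcases segs b with hb | hb | hb
        · have := hbij1.injOn (Set.mem_univ (⟨a.1, by omega⟩ : Fin (k - 1)))
            (Set.mem_univ (⟨b.1, by omega⟩ : Fin (k - 1)))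
            (by rw [hA a ha, hA b hb] at hab; exact hab)
          simpa using this
        · have h1 := vA a ha; have h2 := hB b hb; omega
        · have h1 := vA a ha; have h2 := vC b hb; omega
        · have h1 := hB a ha; have h2 := vA b hb; omega
        · omega
        · have h1 := hB a ha; have h2 := vC b hb; omega
        · have h1 := vC a ha; have h2 := vA b hb; omega
        · have h1 := vC a ha; have h2 := hB b hb; omega
        · have := hbij2.injOn (Set.mem_univ (⟨a.1 - k, by have := a.isLt; omega⟩ : Fin (n - k)))
            (Set.mem_univ (⟨b.1 - k, by have := b.isLt; omega⟩ : Fin (n - k)))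
            (by rw [hC a ha, hC b hb] at hab; exact hab)
          have := congrArg Fin.val this
          simp only [Fin.val_mk] at this
          omega
      exact Fin.ext key
    · -- SurjOn
      intro m hm
      obtain ⟨hm1, hm2⟩ := Set.mem_Icc.mp hm
      by_cases h : m ≤ n - k
      · obtain ⟨x, -, hx⟩ := hbij2.surjOn (Set.mem_Icc.mpr ⟨hm1, h⟩)
        refine ⟨⟨x.1 + k, by have := x.isLt; omega⟩, Set.mem_univ _, ?_⟩
        rw [hC ⟨x.1 + k, by have := x.isLt; omega⟩ (by simp)]
        simpa using hx
      · by_cases h2 : m = n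
        · refine ⟨⟨k - 1, by omega⟩, Set.mem_univ _, ?_⟩
          rw [hB ⟨k - 1, by omega⟩ (by simp; omega)]
          exact h2.symm
        · obtain ⟨x, -, hx⟩ := hbij1.surjOn (show m ∈ Set.Icc (n - k + 1) (n - 1) from Set.mem_Icc.mpr ⟨by omega, by omega⟩)
          refine ⟨⟨x.1, by have := x.isLt; omega⟩, Set.mem_univ _, ?_⟩
          rw [hA ⟨x.1, by have := x.isLt; omega⟩ (by simp; have := x.isLt; omega)]
          simpa using hx
  · -- Avoids132
    intro a b c hab hbc
    rintro ⟨hac, hcb⟩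
    have hab' : a.1 < b.1 := hab
    have hbc' : b.1 < c.1 := hbc
    rcases segs a with ha | ha | ha <;> rcases segs b with hb | hb | hb <;>
      rcases segs c with hc | hc | hc <;> try omega
    · -- AAA
      exact havoid1 ⟨a.1, by omega⟩ ⟨b.1, by omega⟩ ⟨c.1, by omega⟩
        (by exact hab') (by exact hbc')
        ⟨by rw [hA a ha, hA c hc] at hac; exact hac,
         by rw [hA c hc, hA b hb] at hcb; exact hcb⟩
    · -- AAB
      have h1 := vA b hb; have h2 := hB c hc; omega
    · -- AAC
      have h1 := vA a ha; have h2 := vC c hc; omega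
    · -- ABC
      have h1 := vA a ha; have h2 := vC c hc; omega
    · -- ACC
      have h1 := vA a ha; have h2 := vC c hc; omega
    · -- BCC
      have h1 := hB a ha; have h2 := vC c hc; omega
    · -- CCC
      exact havoid2 ⟨a.1 - k, by have := a.isLt; omega⟩ ⟨b.1 - k, by have := b.isLt; omega⟩
        ⟨c.1 - k, by have := c.isLt; omega⟩
        (by show a.1 - k < b.1 - k; omega) (by show b.1 - k < c.1 - k; omega)
        ⟨by rw [hC a ha, hC c hc] at hac; exact hac,
         by rw [hC c hc, hC b hb] at hcb; exact hcb⟩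
end

section
/- For every n ≥ 1, for every r ≥ 0 and s ≥ 0: f(n,r,s) = Σ f(n₁,r₁,s₁)·f(n₂,r₂,s₂), where the sum is over all nonnegative integers n₁,n₂,r₁,r₂,s₁,s₂ with n₁+n₂ = n−1, r₁+r₂+s₁ = r, and s₁+s₂+n₁ = s. Moreover f(0,r,s) = 1 if r = s = 0 and f(0,r,s) = 0 otherwise. -/
/-- `count123 a` is the number of (123) patterns of `a`. -/
def count123 {m : ℕ} (a : Fin m → ℕ) : ℕ :=
  (Finset.univ.filter (fun t : Fin m × Fin m × Fin m =>
    t.1 < t.2.1 ∧ t.2.1 < t.2.2 ∧ a t.1 < a t.2.1 ∧ a t.2.1 < a t.2.2)).card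

/-- `count12 a` is the number of (12) patterns of `a`. -/
def count12 {m : ℕ} (a : Fin m → ℕ) : ℕ :=
  (Finset.univ.filter (fun t : Fin m × Fin m =>
    t.1 < t.2 ∧ a t.1 < a t.2)).card

/-- `f n r s` is the number of 132-avoiding permutations of `{1,…,n}` having
exactly `r` (123) patterns and exactly `s` (12) patterns. -/
noncomputable def f (n r s : ℕ) : ℕ :=
  Nat.card {π : Equiv.Perm (Fin n) //
    Avoids132 (fun i => (π i : ℕ)) ∧
    count123 (fun i => (π i : ℕ)) = r ∧
    count12 (fun i => (π i : ℕ)) = s}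



open Finset Equiv

instance {m : ℕ} (a : Fin m → ℕ) : Decidable (Avoids132 a) :=
  inferInstanceAs (Decidable (∀ i j k : Fin m, i < j → j < k → ¬ (a i < a k ∧ a k < a j)))


def glueSeq (n₁ n₂ : ℕ) (A₁ A₂ : ℕ → ℕ) : ℕ → ℕ := fun m =>
  if m < n₁ then n₂ + A₁ m else if m = n₁ then n₁ + n₂ else A₂ (m - (n₁ + 1))

lemma glueSeq_left {n₁ n₂ m : ℕ} (A₁ A₂ : ℕ → ℕ) (h : m < n₁) :
    glueSeq n₁ n₂ A₁ A₂ m = n₂ + A₁ m := by simp [glueSeq, h]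

lemma glueSeq_mid {n₁ n₂ : ℕ} (A₁ A₂ : ℕ → ℕ) :
    glueSeq n₁ n₂ A₁ A₂ n₁ = n₁ + n₂ := by simp [glueSeq]

lemma glueSeq_right {n₁ n₂ m : ℕ} (A₁ A₂ : ℕ → ℕ) (h : n₁ < m) :
    glueSeq n₁ n₂ A₁ A₂ m = A₂ (m - (n₁ + 1)) := by
  have h1 : ¬ m < n₁ := by omega
  have h2 : ¬ m = n₁ := by omega
  simp [glueSeq, h1, h2]


lemma count12_eq (A : ℕ → ℕ) (m : ℕ) :
    count12 (fun i : Fin m => A i) =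
    ((Finset.range m ×ˢ Finset.range m).filter fun t : ℕ × ℕ => t.1 < t.2 ∧ A t.1 < A t.2).card := by
  rw [count12]
  rw [← Finset.card_image_of_injective _ (f := fun t : Fin m × Fin m => ((t.1 : ℕ), (t.2 : ℕ)))
    (fun a b hab => by
      obtain ⟨h1, h2⟩ := Prod.mk.injEq .. ▸ hab
      exact Prod.ext (Fin.val_injective h1) (Fin.val_injective h2))]
  congr 1
  ext t
  simp only [Finset.mem_image, Finset.mem_filter, Finset.mem_univ, true_and,
    Finset.mem_product, Finset.mem_range, Fin.lt_def]
  constructor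
  · rintro ⟨a, ha, rfl⟩
    exact ⟨⟨a.1.isLt, a.2.isLt⟩, ha⟩
  · rintro ⟨⟨h1, h2⟩, h3⟩
    exact ⟨(⟨t.1, h1⟩, ⟨t.2, h2⟩), h3, rfl⟩

lemma count123_eq (A : ℕ → ℕ) (m : ℕ) :
    count123 (fun i : Fin m => A i) =
    ((Finset.range m ×ˢ Finset.range m ×ˢ Finset.range m).filter
      fun t : ℕ × ℕ × ℕ => t.1 < t.2.1 ∧ t.2.1 < t.2.2 ∧ A t.1 < A t.2.1 ∧ A t.2.1 < A t.2.2).card := by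
  rw [count123]
  rw [← Finset.card_image_of_injective _
    (f := fun t : Fin m × Fin m × Fin m => ((t.1 : ℕ), (t.2.1 : ℕ), (t.2.2 : ℕ)))
    (fun a b hab => by
      simp only [Prod.mk.injEq] at hab
      exact Prod.ext (Fin.val_injective hab.1)
        (Prod.ext (Fin.val_injective hab.2.1) (Fin.val_injective hab.2.2)))]
  congr 1
  ext t
  simp only [Finset.mem_image, Finset.mem_filter, Finset.mem_univ, true_and,
    Finset.mem_product, Finset.mem_range, Fin.lt_def]
  constructor
  · rintro ⟨a, ha, rfl⟩
    exact ⟨⟨a.1.isLt, a.2.1.isLt, a.2.2.isLt⟩, ha⟩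
  · rintro ⟨⟨h1, h2, h3⟩, h4⟩
    exact ⟨(⟨t.1, h1⟩, ⟨t.2.1, h2⟩, ⟨t.2.2, h3⟩), h4, rfl⟩

lemma count12_glue {N n₁ n₂ : ℕ} (hN : N = n₁ + 1 + n₂) (A₁ A₂ : ℕ → ℕ)
    (h₁ : ∀ m, m < n₁ → A₁ m < n₁) (h₂ : ∀ m, m < n₂ → A₂ m < n₂) :
    count12 (fun i : Fin N => glueSeq n₁ n₂ A₁ A₂ i) =
      count12 (fun i : Fin n₁ => A₁ i) + count12 (fun i : Fin n₂ => A₂ i) + n₁ := by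
  rw [count12_eq, count12_eq, count12_eq]
  set W := (range N ×ˢ range N).filter
    (fun t : ℕ × ℕ => t.1 < t.2 ∧ glueSeq n₁ n₂ A₁ A₂ t.1 < glueSeq n₁ n₂ A₁ A₂ t.2) with hW
  have key1 := Finset.card_filter_add_card_filter_not (s := W) (p := fun t : ℕ × ℕ => t.2 < n₁)
  have key2 := Finset.card_filter_add_card_filter_not
    (s := W.filter (fun t : ℕ × ℕ => ¬ t.2 < n₁)) (p := fun t : ℕ × ℕ => t.2 = n₁)
  have e1 : W.filter (fun t : ℕ × ℕ => t.2 < n₁) =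
      (range n₁ ×ˢ range n₁).filter (fun t : ℕ × ℕ => t.1 < t.2 ∧ A₁ t.1 < A₁ t.2) := by
    ext t
    simp only [hW, mem_filter, mem_product, mem_range]
    constructor
    · rintro ⟨⟨⟨hN1, hN2⟩, hlt, hg⟩, h2lt⟩
      have h1lt : t.1 < n₁ := lt_trans hlt h2lt
      rw [glueSeq_left _ _ h1lt, glueSeq_left _ _ h2lt] at hg
      exact ⟨⟨h1lt, h2lt⟩, hlt, by omega⟩
    · rintro ⟨⟨h1, h2⟩, hlt, ha⟩
      refine ⟨⟨⟨by omega, by omega⟩, hlt, ?_⟩, h2⟩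
      rw [glueSeq_left _ _ h1, glueSeq_left _ _ h2]; omega
  have e2 : (W.filter (fun t : ℕ × ℕ => ¬ t.2 < n₁)).filter (fun t : ℕ × ℕ => t.2 = n₁) =
      (range n₁).image (fun i => (i, n₁)) := by
    ext t
    simp only [hW, mem_filter, mem_product, mem_range, mem_image]
    constructor
    · rintro ⟨⟨⟨⟨hN1, hN2⟩, hlt, hg⟩, hnot⟩, heq⟩
      exact ⟨t.1, by omega, by rw [← heq]⟩
    · rintro ⟨i, hi, rfl⟩
      refine ⟨⟨⟨⟨by omega, by omega⟩, by omega, ?_⟩, by omega⟩, rfl⟩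
      rw [glueSeq_left _ _ hi, glueSeq_mid]
      have := h₁ i hi; omega
  have e2c : ((range n₁).image (fun i => (i, n₁))).card = n₁ := by
    rw [Finset.card_image_of_injective _ (fun a b hab => by
      simpa using (Prod.mk.injEq a n₁ b n₁ ▸ hab).1), Finset.card_range]
  have e3 : ((W.filter (fun t : ℕ × ℕ => ¬ t.2 < n₁)).filter (fun t : ℕ × ℕ => ¬ t.2 = n₁)).card =
      ((range n₂ ×ˢ range n₂).filter (fun t : ℕ × ℕ => t.1 < t.2 ∧ A₂ t.1 < A₂ t.2)).card := by
    refine Finset.card_bij' (fun t _ => (t.1 - (n₁ + 1), t.2 - (n₁ + 1)))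
      (fun t _ => (t.1 + (n₁ + 1), t.2 + (n₁ + 1))) ?_ ?_ ?_ ?_
    · rintro t ht
      simp only [hW, mem_filter, mem_product, mem_range] at ht ⊢
      obtain ⟨⟨⟨⟨hN1, hN2⟩, hlt, hg⟩, hnot⟩, hne⟩ := ht
      have h2r : n₁ < t.2 := by omega
      rw [glueSeq_right _ _ h2r] at hg
      have hb2 : A₂ (t.2 - (n₁ + 1)) < n₂ := h₂ _ (by omega)
      have h1r : n₁ < t.1 := by
        rcases lt_trichotomy t.1 n₁ with h | h | h
        · rw [glueSeq_left _ _ h] at hg; omega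
        · rw [h, glueSeq_mid] at hg; omega
        · exact h
      rw [glueSeq_right _ _ h1r] at hg
      exact ⟨⟨by omega, by omega⟩, by omega, hg⟩
    · rintro t ht
      simp only [hW, mem_filter, mem_product, mem_range] at ht ⊢
      obtain ⟨⟨h1, h2⟩, hlt, ha⟩ := ht
      refine ⟨⟨⟨⟨by omega, by omega⟩, by omega, ?_⟩, by omega⟩, by omega⟩
      rw [glueSeq_right _ _ (by omega : n₁ < t.1 + (n₁ + 1)),
        glueSeq_right _ _ (by omega : n₁ < t.2 + (n₁ + 1))]
      have e : t.1 + (n₁ + 1) - (n₁ + 1) = t.1 := by omega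
      have e' : t.2 + (n₁ + 1) - (n₁ + 1) = t.2 := by omega
      rw [e, e']; exact ha
    · rintro t ht
      simp only [hW, mem_filter, mem_product, mem_range] at ht
      obtain ⟨⟨⟨⟨hN1, hN2⟩, hlt, hg⟩, hnot⟩, hne⟩ := ht
      have h2r : n₁ < t.2 := by omega
      rw [glueSeq_right _ _ h2r] at hg
      have h1r : n₁ < t.1 := by
        rcases lt_trichotomy t.1 n₁ with h | h | h
        · rw [glueSeq_left _ _ h] at hg; have := h₂ (t.2 - (n₁+1)) (by omega); omega
        · rw [h, glueSeq_mid] at hg; have := h₂ (t.2 - (n₁+1)) (by omega); omega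
        · exact h
      dsimp only
      exact Prod.ext (by dsimp only; omega) (by dsimp only; omega)
    · rintro t ht
      dsimp only
      exact Prod.ext (by dsimp only; omega) (by dsimp only; omega)
  have c1 := congrArg Finset.card e1
  have c2 := congrArg Finset.card e2
  omega

lemma count123_glue {N n₁ n₂ : ℕ} (hN : N = n₁ + 1 + n₂) (A₁ A₂ : ℕ → ℕ)
    (h₁ : ∀ m, m < n₁ → A₁ m < n₁) (h₂ : ∀ m, m < n₂ → A₂ m < n₂) :
    count123 (fun i : Fin N => glueSeq n₁ n₂ A₁ A₂ i) =
      count123 (fun i : Fin n₁ => A₁ i) + count123 (fun i : Fin n₂ => A₂ i) +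
        count12 (fun i : Fin n₁ => A₁ i) := by
  rw [count123_eq, count123_eq, count123_eq, count12_eq]
  set W := (range N ×ˢ range N ×ˢ range N).filter
    (fun t : ℕ × ℕ × ℕ => t.1 < t.2.1 ∧ t.2.1 < t.2.2 ∧
      glueSeq n₁ n₂ A₁ A₂ t.1 < glueSeq n₁ n₂ A₁ A₂ t.2.1 ∧
      glueSeq n₁ n₂ A₁ A₂ t.2.1 < glueSeq n₁ n₂ A₁ A₂ t.2.2) with hW
  have key1 := Finset.card_filter_add_card_filter_not (s := W)
    (p := fun t : ℕ × ℕ × ℕ => t.2.2 < n₁)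
  have key2 := Finset.card_filter_add_card_filter_not
    (s := W.filter (fun t : ℕ × ℕ × ℕ => ¬ t.2.2 < n₁)) (p := fun t : ℕ × ℕ × ℕ => t.2.2 = n₁)
  have e1 : W.filter (fun t : ℕ × ℕ × ℕ => t.2.2 < n₁) =
      (range n₁ ×ˢ range n₁ ×ˢ range n₁).filter
        (fun t : ℕ × ℕ × ℕ => t.1 < t.2.1 ∧ t.2.1 < t.2.2 ∧ A₁ t.1 < A₁ t.2.1 ∧ A₁ t.2.1 < A₁ t.2.2) := by
    ext t
    simp only [hW, mem_filter, mem_product, mem_range]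
    constructor
    · rintro ⟨⟨⟨hN1, hN2, hN3⟩, hlt1, hlt2, hg1, hg2⟩, h3lt⟩
      have h2lt : t.2.1 < n₁ := lt_trans hlt2 h3lt
      have h1lt : t.1 < n₁ := lt_trans hlt1 h2lt
      rw [glueSeq_left _ _ h1lt, glueSeq_left _ _ h2lt] at hg1
      rw [glueSeq_left _ _ h2lt, glueSeq_left _ _ h3lt] at hg2
      exact ⟨⟨h1lt, h2lt, h3lt⟩, hlt1, hlt2, by omega, by omega⟩
    · rintro ⟨⟨h1, h2, h3⟩, hlt1, hlt2, ha1, ha2⟩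
      refine ⟨⟨⟨by omega, by omega, by omega⟩, hlt1, hlt2, ?_, ?_⟩, h3⟩
      · rw [glueSeq_left _ _ h1, glueSeq_left _ _ h2]; omega
      · rw [glueSeq_left _ _ h2, glueSeq_left _ _ h3]; omega
  have e2 : ((W.filter (fun t : ℕ × ℕ × ℕ => ¬ t.2.2 < n₁)).filter
        (fun t : ℕ × ℕ × ℕ => t.2.2 = n₁)).card =
      ((range n₁ ×ˢ range n₁).filter (fun t : ℕ × ℕ => t.1 < t.2 ∧ A₁ t.1 < A₁ t.2)).card := by
    refine Finset.card_bij' (fun t _ => (t.1, t.2.1)) (fun p _ => (p.1, p.2, n₁)) ?_ ?_ ?_ ?_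
    · rintro t ht
      simp only [hW, mem_filter, mem_product, mem_range] at ht ⊢
      obtain ⟨⟨⟨⟨hN1, hN2, hN3⟩, hlt1, hlt2, hg1, hg2⟩, hnot⟩, heq⟩ := ht
      have h2lt : t.2.1 < n₁ := by omega
      have h1lt : t.1 < n₁ := lt_trans hlt1 h2lt
      rw [glueSeq_left _ _ h1lt, glueSeq_left _ _ h2lt] at hg1
      exact ⟨⟨h1lt, h2lt⟩, hlt1, by omega⟩
    · rintro p hp
      simp only [mem_filter, mem_product, mem_range] at hp
      obtain ⟨⟨h1, h2⟩, hlt, ha⟩ := hp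
      simp only [hW, mem_filter, mem_product, mem_range]
      refine ⟨⟨⟨⟨by omega, by omega, by omega⟩, hlt, by omega, ?_, ?_⟩, by omega⟩, trivial⟩
      · rw [glueSeq_left _ _ h1, glueSeq_left _ _ h2]; omega
      · rw [glueSeq_left _ _ h2, glueSeq_mid]; have := h₁ p.2 h2; omega
    · rintro t ht
      simp only [hW, mem_filter, mem_product, mem_range] at ht
      obtain ⟨⟨_, _⟩, heq⟩ := ht
      dsimp only
      exact Prod.ext rfl (Prod.ext rfl heq.symm)
    · rintro p hp
      rfl
  have e3 : ((W.filter (fun t : ℕ × ℕ × ℕ => ¬ t.2.2 < n₁)).filter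
        (fun t : ℕ × ℕ × ℕ => ¬ t.2.2 = n₁)).card =
      ((range n₂ ×ˢ range n₂ ×ˢ range n₂).filter
        (fun t : ℕ × ℕ × ℕ => t.1 < t.2.1 ∧ t.2.1 < t.2.2 ∧ A₂ t.1 < A₂ t.2.1 ∧ A₂ t.2.1 < A₂ t.2.2)).card := by
    refine Finset.card_bij' (fun t _ => (t.1 - (n₁+1), t.2.1 - (n₁+1), t.2.2 - (n₁+1)))
      (fun t _ => (t.1 + (n₁+1), t.2.1 + (n₁+1), t.2.2 + (n₁+1))) ?_ ?_ ?_ ?_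
    · rintro t ht
      simp only [hW, mem_filter, mem_product, mem_range] at ht ⊢
      obtain ⟨⟨⟨⟨hN1, hN2, hN3⟩, hlt1, hlt2, hg1, hg2⟩, hnot⟩, hne⟩ := ht
      have h3r : n₁ < t.2.2 := by omega
      rw [glueSeq_right _ _ h3r] at hg2
      have hb3 : A₂ (t.2.2 - (n₁ + 1)) < n₂ := h₂ _ (by omega)
      have h2r : n₁ < t.2.1 := by
        rcases lt_trichotomy t.2.1 n₁ with h | h | h
        · rw [glueSeq_left _ _ h] at hg2; omega
        · rw [h, glueSeq_mid] at hg2; omega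
        · exact h
      rw [glueSeq_right _ _ h2r] at hg1 hg2
      have hb2 : A₂ (t.2.1 - (n₁ + 1)) < n₂ := h₂ _ (by omega)
      have h1r : n₁ < t.1 := by
        rcases lt_trichotomy t.1 n₁ with h | h | h
        · rw [glueSeq_left _ _ h] at hg1; omega
        · rw [h, glueSeq_mid] at hg1; omega
        · exact h
      rw [glueSeq_right _ _ h1r] at hg1
      exact ⟨⟨by omega, by omega, by omega⟩, by omega, by omega, hg1, hg2⟩
    · rintro t ht
      simp only [hW, mem_filter, mem_product, mem_range] at ht ⊢
      obtain ⟨⟨h1, h2, h3⟩, hlt1, hlt2, ha1, ha2⟩ := ht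
      refine ⟨⟨⟨⟨by omega, by omega, by omega⟩, by omega, by omega, ?_, ?_⟩, by omega⟩, by omega⟩
      · rw [glueSeq_right _ _ (by omega : n₁ < t.1 + (n₁+1)),
          glueSeq_right _ _ (by omega : n₁ < t.2.1 + (n₁+1))]
        have e : t.1 + (n₁ + 1) - (n₁ + 1) = t.1 := by omega
        have e' : t.2.1 + (n₁ + 1) - (n₁ + 1) = t.2.1 := by omega
        rw [e, e']; exact ha1
      · rw [glueSeq_right _ _ (by omega : n₁ < t.2.1 + (n₁+1)),
          glueSeq_right _ _ (by omega : n₁ < t.2.2 + (n₁+1))]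
        have e : t.2.1 + (n₁ + 1) - (n₁ + 1) = t.2.1 := by omega
        have e' : t.2.2 + (n₁ + 1) - (n₁ + 1) = t.2.2 := by omega
        rw [e, e']; exact ha2
    · rintro t ht
      simp only [hW, mem_filter, mem_product, mem_range] at ht
      obtain ⟨⟨⟨⟨hN1, hN2, hN3⟩, hlt1, hlt2, hg1, hg2⟩, hnot⟩, hne⟩ := ht
      have h3r : n₁ < t.2.2 := by omega
      rw [glueSeq_right _ _ h3r] at hg2
      have hb3 : A₂ (t.2.2 - (n₁ + 1)) < n₂ := h₂ _ (by omega)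
      have h2r : n₁ < t.2.1 := by
        rcases lt_trichotomy t.2.1 n₁ with h | h | h
        · rw [glueSeq_left _ _ h] at hg2; omega
        · rw [h, glueSeq_mid] at hg2; omega
        · exact h
      rw [glueSeq_right _ _ h2r] at hg1
      have hb2 : A₂ (t.2.1 - (n₁ + 1)) < n₂ := h₂ _ (by omega)
      have h1r : n₁ < t.1 := by
        rcases lt_trichotomy t.1 n₁ with h | h | h
        · rw [glueSeq_left _ _ h] at hg1; omega
        · rw [h, glueSeq_mid] at hg1; omega
        · exact h
      dsimp only
      exact Prod.ext (by dsimp only; omega)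
        (Prod.ext (by dsimp only; omega) (by dsimp only; omega))
    · rintro t ht
      dsimp only
      exact Prod.ext (by dsimp only; omega)
        (Prod.ext (by dsimp only; omega) (by dsimp only; omega))
  have c1 := congrArg Finset.card e1
  omega

lemma avoids132_glue {N n₁ n₂ : ℕ} (hN : N = n₁ + 1 + n₂) (A₁ A₂ : ℕ → ℕ)
    (h₁ : ∀ m, m < n₁ → A₁ m < n₁) (h₂ : ∀ m, m < n₂ → A₂ m < n₂)
    (hA₁ : Avoids132 (fun i : Fin n₁ => A₁ i)) (hA₂ : Avoids132 (fun i : Fin n₂ => A₂ i)) :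
    Avoids132 (fun i : Fin N => glueSeq n₁ n₂ A₁ A₂ i) := by
  rintro i j k hij hjk ⟨c1, c2⟩
  rw [Fin.lt_def] at hij hjk
  dsimp only at c1 c2
  rcases lt_trichotomy (k : ℕ) n₁ with hk | hk | hk
  · have hj' : (j : ℕ) < n₁ := lt_trans hjk hk
    have hi' : (i : ℕ) < n₁ := lt_trans hij hj'
    rw [glueSeq_left _ _ hi', glueSeq_left _ _ hk] at c1
    rw [glueSeq_left _ _ hk, glueSeq_left _ _ hj'] at c2
    exact hA₁ ⟨i, hi'⟩ ⟨j, hj'⟩ ⟨k, hk⟩ (Fin.mk_lt_mk.mpr hij) (Fin.mk_lt_mk.mpr hjk)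
      ⟨by dsimp only; omega, by dsimp only; omega⟩
  · have hj' : (j : ℕ) < n₁ := by omega
    rw [hk, glueSeq_mid, glueSeq_left _ _ hj'] at c2
    have := h₁ j hj'; omega
  · have hkN : (k : ℕ) < N := k.isLt
    have hg : glueSeq n₁ n₂ A₁ A₂ k = A₂ ((k : ℕ) - (n₁+1)) := glueSeq_right _ _ hk
    have hbk : A₂ ((k : ℕ) - (n₁+1)) < n₂ := h₂ _ (by omega)
    rcases lt_trichotomy (j : ℕ) n₁ with hj' | hj' | hj'
    · have hi' : (i : ℕ) < n₁ := lt_trans hij hj'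
      rw [glueSeq_left _ _ hi', hg] at c1; omega
    · have hi' : (i : ℕ) < n₁ := by omega
      rw [glueSeq_left _ _ hi', hg] at c1; omega
    · rcases lt_trichotomy (i : ℕ) n₁ with hi' | hi' | hi'
      · rw [glueSeq_left _ _ hi', hg] at c1; omega
      · rw [hi', glueSeq_mid, hg] at c1; omega
      · have hgj : glueSeq n₁ n₂ A₁ A₂ j = A₂ ((j : ℕ) - (n₁+1)) := glueSeq_right _ _ hj'
        have hgi : glueSeq n₁ n₂ A₁ A₂ i = A₂ ((i : ℕ) - (n₁+1)) := glueSeq_right _ _ hi'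
        rw [hgi, hg] at c1
        rw [hg, hgj] at c2
        exact hA₂ ⟨(i : ℕ) - (n₁+1), by omega⟩ ⟨(j : ℕ) - (n₁+1), by omega⟩
          ⟨(k : ℕ) - (n₁+1), by omega⟩ (Fin.mk_lt_mk.mpr (by omega)) (Fin.mk_lt_mk.mpr (by omega))
          ⟨c1, c2⟩

def permVals {n : ℕ} (π : Equiv.Perm (Fin n)) : ℕ → ℕ :=
  fun m => if h : m < n then (π ⟨m, h⟩ : ℕ) else 0

lemma permVals_coe {n : ℕ} (π : Equiv.Perm (Fin n)) (i : Fin n) :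
    permVals π (i : ℕ) = (π i : ℕ) := by
  simp [permVals, i.isLt]

lemma permVals_lt {n : ℕ} (π : Equiv.Perm (Fin n)) {m : ℕ} (h : m < n) :
    permVals π m < n := by
  simp only [permVals, dif_pos h]
  exact (π ⟨m, h⟩).isLt

lemma permVals_inj {n : ℕ} (π : Equiv.Perm (Fin n)) {a b : ℕ} (ha : a < n) (hb : b < n)
    (h : permVals π a = permVals π b) : a = b := by
  simp only [permVals, dif_pos ha, dif_pos hb] at h
  have := π.injective (Fin.val_injective h)
  exact congrArg Fin.val this

noncomputable def mkPerm {k : ℕ} (g : Fin k → Fin k) : Equiv.Perm (Fin k) :=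
  if h : Function.Bijective g then Equiv.ofBijective g h else 1

lemma mkPerm_apply {k : ℕ} (g : Fin k → Fin k) (h : Function.Injective g) (i : Fin k) :
    mkPerm g i = g i := by
  rw [mkPerm, dif_pos (Finite.injective_iff_bijective.mp h)]
  rfl

noncomputable def lefty (n₂ k : ℕ) {n : ℕ} (π : Equiv.Perm (Fin n)) : Equiv.Perm (Fin k) :=
  mkPerm (fun i => ⟨(permVals π i - n₂) % k, Nat.mod_lt _ i.pos⟩)

noncomputable def righty (n₁ k : ℕ) {n : ℕ} (π : Equiv.Perm (Fin n)) : Equiv.Perm (Fin k) :=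
  mkPerm (fun i => ⟨permVals π (n₁ + 1 + i) % k, Nat.mod_lt _ i.pos⟩)

noncomputable def gluePerm (n₁ n₂ : ℕ) {n : ℕ} (π₁ : Equiv.Perm (Fin n₁)) (π₂ : Equiv.Perm (Fin n₂)) :
    Equiv.Perm (Fin n) :=
  mkPerm (fun i => ⟨glueSeq n₁ n₂ (permVals π₁) (permVals π₂) i % n, Nat.mod_lt _ i.pos⟩)

lemma lefty_spec {n : ℕ} (π : Equiv.Perm (Fin n)) (n₂ k : ℕ) (hk : k ≤ n)
    (hb : ∀ m, m < k → n₂ ≤ permVals π m ∧ permVals π m < n₂ + k) :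
    ∀ i : Fin k, ((lefty n₂ k π) i : ℕ) = permVals π i - n₂ := by
  have hinj : Function.Injective
      (fun i : Fin k => (⟨(permVals π i - n₂) % k, Nat.mod_lt _ i.pos⟩ : Fin k)) := by
    intro a b hab
    have h1 := hb a a.isLt
    have h2 := hb b b.isLt
    have hv : (permVals π a - n₂) % k = (permVals π b - n₂) % k := congrArg Fin.val hab
    rw [Nat.mod_eq_of_lt (by omega), Nat.mod_eq_of_lt (by omega)] at hv
    exact Fin.val_injective
      (permVals_inj π (lt_of_lt_of_le a.isLt hk) (lt_of_lt_of_le b.isLt hk) (by omega))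
  intro i
  rw [lefty, mkPerm_apply _ hinj]
  exact Nat.mod_eq_of_lt (by have := hb i i.isLt; omega)

lemma righty_spec {n : ℕ} (π : Equiv.Perm (Fin n)) (n₁ k : ℕ) (hkn : n₁ + 1 + k ≤ n)
    (hb : ∀ m, m < k → permVals π (n₁ + 1 + m) < k) :
    ∀ i : Fin k, ((righty n₁ k π) i : ℕ) = permVals π (n₁ + 1 + i) := by
  have hinj : Function.Injective
      (fun i : Fin k => (⟨permVals π (n₁ + 1 + i) % k, Nat.mod_lt _ i.pos⟩ : Fin k)) := by
    intro a b hab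
    have hv : permVals π (n₁+1+a) % k = permVals π (n₁+1+b) % k := congrArg Fin.val hab
    rw [Nat.mod_eq_of_lt (hb a a.isLt), Nat.mod_eq_of_lt (hb b b.isLt)] at hv
    have := permVals_inj π (by omega : n₁+1+(a:ℕ) < n) (by omega : n₁+1+(b:ℕ) < n) hv
    exact Fin.val_injective (by omega)
  intro i
  rw [righty, mkPerm_apply _ hinj]
  exact Nat.mod_eq_of_lt (hb i i.isLt)

lemma gluePerm_spec {n n₁ n₂ : ℕ} (hn : n = n₁ + 1 + n₂)
    (π₁ : Equiv.Perm (Fin n₁)) (π₂ : Equiv.Perm (Fin n₂)) :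
    ∀ i : Fin n, ((gluePerm n₁ n₂ π₁ π₂) i : ℕ) =
      glueSeq n₁ n₂ (permVals π₁) (permVals π₂) i := by
  have hbnd : ∀ m, m < n → glueSeq n₁ n₂ (permVals π₁) (permVals π₂) m < n := by
    intro m hm
    rcases lt_trichotomy m n₁ with h | h | h
    · rw [glueSeq_left _ _ h]; have := permVals_lt π₁ h; omega
    · rw [h, glueSeq_mid]; omega
    · rw [glueSeq_right _ _ h]
      have : m - (n₁ + 1) < n₂ := by omega
      have := permVals_lt π₂ this; omega
  have hinj : Function.Injective
      (fun i : Fin n =>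
        (⟨glueSeq n₁ n₂ (permVals π₁) (permVals π₂) i % n, Nat.mod_lt _ i.pos⟩ : Fin n)) := by
    intro a b hab
    have hv : glueSeq n₁ n₂ (permVals π₁) (permVals π₂) a % n
        = glueSeq n₁ n₂ (permVals π₁) (permVals π₂) b % n := congrArg Fin.val hab
    rw [Nat.mod_eq_of_lt (hbnd _ a.isLt), Nat.mod_eq_of_lt (hbnd _ b.isLt)] at hv
    apply Fin.val_injective
    rcases lt_trichotomy (a : ℕ) n₁ with ha | ha | ha <;>
      rcases lt_trichotomy (b : ℕ) n₁ with hb | hb | hb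
    · rw [glueSeq_left _ _ ha, glueSeq_left _ _ hb] at hv
      exact permVals_inj π₁ ha hb (by omega)
    · rw [glueSeq_left _ _ ha, hb, glueSeq_mid] at hv
      have := permVals_lt π₁ ha; omega
    · rw [glueSeq_left _ _ ha, glueSeq_right _ _ hb] at hv
      have := permVals_lt π₂ (by omega : (b:ℕ) - (n₁+1) < n₂); omega
    · rw [ha, glueSeq_mid, glueSeq_left _ _ hb] at hv
      have := permVals_lt π₁ hb; omega
    · omega
    · rw [ha, glueSeq_mid, glueSeq_right _ _ hb] at hv
      have := permVals_lt π₂ (by omega : (b:ℕ) - (n₁+1) < n₂); omega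
    · rw [glueSeq_right _ _ ha, glueSeq_left _ _ hb] at hv
      have := permVals_lt π₂ (by omega : (a:ℕ) - (n₁+1) < n₂); omega
    · rw [glueSeq_right _ _ ha, hb, glueSeq_mid] at hv
      have := permVals_lt π₂ (by omega : (a:ℕ) - (n₁+1) < n₂); omega
    · rw [glueSeq_right _ _ ha, glueSeq_right _ _ hb] at hv
      have := permVals_inj π₂ (by omega : (a:ℕ) - (n₁+1) < n₂) (by omega : (b:ℕ) - (n₁+1) < n₂) hv
      omega
  intro i
  rw [gluePerm, mkPerm_apply _ hinj]
  exact Nat.mod_eq_of_lt (hbnd _ i.isLt)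

lemma avoids_sub {n k n₂ : ℕ} (A : ℕ → ℕ) (hk : k ≤ n)
    (hA : Avoids132 (fun i : Fin n => A i)) :
    Avoids132 (fun i : Fin k => A i - n₂) := by
  rintro i j l h1 h2 ⟨c1, c2⟩
  dsimp only at c1 c2
  refine hA ⟨i, lt_of_lt_of_le i.isLt hk⟩ ⟨j, lt_of_lt_of_le j.isLt hk⟩
    ⟨l, lt_of_lt_of_le l.isLt hk⟩ (Fin.mk_lt_mk.mpr (Fin.lt_def.mp h1))
    (Fin.mk_lt_mk.mpr (Fin.lt_def.mp h2)) ⟨by dsimp only; omega, by dsimp only; omega⟩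

lemma avoids_shift {n k n₁ : ℕ} (A : ℕ → ℕ) (hkn : n₁ + 1 + k ≤ n)
    (hA : Avoids132 (fun i : Fin n => A i)) :
    Avoids132 (fun i : Fin k => A (n₁ + 1 + i)) := by
  rintro i j l h1 h2 ⟨c1, c2⟩
  dsimp only at c1 c2
  refine hA ⟨n₁ + 1 + i, by omega⟩ ⟨n₁ + 1 + j, by omega⟩ ⟨n₁ + 1 + l, by omega⟩
    (Fin.mk_lt_mk.mpr (by have := Fin.lt_def.mp h1; omega))
    (Fin.mk_lt_mk.mpr (by have := Fin.lt_def.mp h2; omega))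
    ⟨by dsimp only; exact c1, by dsimp only; exact c2⟩

lemma card_val_gt {n : ℕ} (π : Equiv.Perm (Fin n)) {v : ℕ} (hv : v < n) :
    (Finset.univ.filter fun w : Fin n => v < (π w : ℕ)).card = n - 1 - v := by
  have h1 : (Finset.univ.filter fun w : Fin n => v < (π w : ℕ)).card
      = (Finset.univ.filter fun u : Fin n => v < (u : ℕ)).card := by
    refine Finset.card_bij (fun w _ => π w) ?_ ?_ ?_
    · intro a ha; simp at ha ⊢; exact ha
    · intro a _ b _ hab; exact π.injective hab
    · intro b hb; refine ⟨π.symm b, ?_, by simp⟩; simp at hb ⊢; simpa using hb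
  rw [h1]
  have h2 : (Finset.univ.filter fun u : Fin n => v < (u : ℕ)) = Finset.Ioi (⟨v, hv⟩ : Fin n) := by
    ext u; simp [Finset.mem_Ioi, Fin.lt_def]
  rw [h2, Fin.card_Ioi]

lemma card_val_lt {n : ℕ} (π : Equiv.Perm (Fin n)) {v : ℕ} (hv : v < n) :
    (Finset.univ.filter fun w : Fin n => (π w : ℕ) < v).card = v := by
  have h1 : (Finset.univ.filter fun w : Fin n => (π w : ℕ) < v).card
      = (Finset.univ.filter fun u : Fin n => (u : ℕ) < v).card := by
    refine Finset.card_bij (fun w _ => π w) ?_ ?_ ?_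
    · intro a ha; simp at ha ⊢; exact ha
    · intro a _ b _ hab; exact π.injective hab
    · intro b hb; refine ⟨π.symm b, ?_, by simp⟩; simp at hb ⊢; simpa using hb
  rw [h1]
  have h2 : (Finset.univ.filter fun u : Fin n => (u : ℕ) < v) = Finset.Iio (⟨v, hv⟩ : Fin n) := by
    ext u; simp [Finset.mem_Iio, Fin.lt_def]
  rw [h2, Fin.card_Iio]

lemma struct_ord {n : ℕ} (π : Equiv.Perm (Fin n)) (hA : Avoids132 (fun i : Fin n => (π i : ℕ)))
    {K : ℕ} (hKn : K < n) (hmax : (π ⟨K, hKn⟩ : ℕ) = n - 1) :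
    ∀ p q, p < K → K < q → q < n → permVals π q < permVals π p := by
  intro p q hp hq hqn
  have hpn : p < n := by omega
  have h := hA ⟨p, hpn⟩ ⟨K, hKn⟩ ⟨q, hqn⟩ (Fin.mk_lt_mk.mpr hp) (Fin.mk_lt_mk.mpr hq)
  dsimp only at h
  have hne : (π ⟨q, hqn⟩ : ℕ) ≠ (π ⟨K, hKn⟩ : ℕ) := by
    intro hc
    have h2 := π.injective (Fin.val_injective hc)
    have := congrArg Fin.val h2; dsimp at this; omega
  have hlt := (π ⟨q, hqn⟩).isLt
  have hne2 : (π ⟨p, hpn⟩ : ℕ) ≠ (π ⟨q, hqn⟩ : ℕ) := by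
    intro hc
    have h2 := π.injective (Fin.val_injective hc)
    have := congrArg Fin.val h2; dsimp at this; omega
  simp only [permVals, dif_pos hpn, dif_pos hqn]
  by_contra hcon
  exact h ⟨by omega, by omega⟩

lemma struct_right {n : ℕ} (π : Equiv.Perm (Fin n)) (hA : Avoids132 (fun i : Fin n => (π i : ℕ)))
    {K : ℕ} (hKn : K < n) (hmax : (π ⟨K, hKn⟩ : ℕ) = n - 1) :
    ∀ m, K < m → m < n → permVals π m < n - 1 - K := by
  intro q hq hqn
  have hvq : permVals π q = (π ⟨q, hqn⟩ : ℕ) := by simp [permVals, hqn]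
  have hvn : permVals π q < n := permVals_lt π hqn
  have hU := card_val_gt π hvn
  have hsub : insert (⟨K, hKn⟩ : Fin n) (Finset.univ.filter fun w : Fin n => (w : ℕ) < K)
      ⊆ Finset.univ.filter fun w : Fin n => permVals π q < (π w : ℕ) := by
    intro w hw
    simp only [Finset.mem_insert, Finset.mem_filter, Finset.mem_univ, true_and] at hw ⊢
    rcases hw with rfl | hw
    · have hneq : (π ⟨q, hqn⟩ : ℕ) ≠ n - 1 := by
        intro hc
        have h2 : π ⟨q, hqn⟩ = π ⟨K, hKn⟩ := Fin.val_injective (by omega)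
        have := congrArg Fin.val (π.injective h2); dsimp at this; omega
      omega
    · have h1 := struct_ord π hA hKn hmax (w : ℕ) q hw hq hqn
      have h2 := permVals_coe π w
      omega
  have hcard : (insert (⟨K, hKn⟩ : Fin n)
      (Finset.univ.filter fun w : Fin n => (w : ℕ) < K)).card = K + 1 := by
    rw [Finset.card_insert_of_notMem (by simp)]
    have h3 : (Finset.univ.filter fun w : Fin n => (w : ℕ) < K)
        = Finset.Iio (⟨K, hKn⟩ : Fin n) := by
      ext u; simp [Finset.mem_Iio, Fin.lt_def]
    rw [h3, Fin.card_Iio]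
  have := Finset.card_le_card hsub
  omega

lemma struct_left {n : ℕ} (π : Equiv.Perm (Fin n)) (hA : Avoids132 (fun i : Fin n => (π i : ℕ)))
    {K : ℕ} (hKn : K < n) (hmax : (π ⟨K, hKn⟩ : ℕ) = n - 1) :
    ∀ m, m < K → n - 1 - K ≤ permVals π m ∧ permVals π m < n - 1 := by
  intro p hp
  have hpn : p < n := by omega
  have hvq : permVals π p = (π ⟨p, hpn⟩ : ℕ) := by simp [permVals, hpn]
  have hub : permVals π p < n - 1 := by
    have hne : (π ⟨p, hpn⟩ : ℕ) ≠ n - 1 := by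
      intro hc
      have h2 : π ⟨p, hpn⟩ = π ⟨K, hKn⟩ := Fin.val_injective (by omega)
      have := congrArg Fin.val (π.injective h2); dsimp at this; omega
    have := (π ⟨p, hpn⟩).isLt; omega
  refine ⟨?_, hub⟩
  have hvn : permVals π p < n := permVals_lt π hpn
  have hL := card_val_lt π hvn
  have hsub : (Finset.univ.filter fun w : Fin n => K < (w : ℕ))
      ⊆ Finset.univ.filter fun w : Fin n => (π w : ℕ) < permVals π p := by
    intro w hw
    simp only [Finset.mem_filter, Finset.mem_univ, true_and] at hw ⊢
    have h1 := struct_ord π hA hKn hmax p (w : ℕ) hp hw w.isLt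
    have h2 := permVals_coe π w
    omega
  have hcard : (Finset.univ.filter fun w : Fin n => K < (w : ℕ)).card = n - 1 - K := by
    have h3 : (Finset.univ.filter fun w : Fin n => K < (w : ℕ))
        = Finset.Ioi (⟨K, hKn⟩ : Fin n) := by
      ext u; simp [Finset.mem_Ioi, Fin.lt_def]
    rw [h3, Fin.card_Ioi]
  have := Finset.card_le_card hsub
  omega

lemma count12_cast {N M : ℕ} (h : N = M) (A : ℕ → ℕ) :
    count12 (fun i : Fin N => A i) = count12 (fun i : Fin M => A i) := by subst h; rfl

lemma count123_cast {N M : ℕ} (h : N = M) (A : ℕ → ℕ) :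
    count123 (fun i : Fin N => A i) = count123 (fun i : Fin M => A i) := by subst h; rfl

lemma count12_congr {k : ℕ} {A B : ℕ → ℕ} (h : ∀ m, m < k → A m = B m) :
    count12 (fun i : Fin k => A i) = count12 (fun i : Fin k => B i) :=
  congrArg count12 (funext fun i => h i i.isLt)

lemma count123_congr {k : ℕ} {A B : ℕ → ℕ} (h : ∀ m, m < k → A m = B m) :
    count123 (fun i : Fin k => A i) = count123 (fun i : Fin k => B i) :=
  congrArg count123 (funext fun i => h i i.isLt)

lemma f_eq (n r s : ℕ) :
    f n r s = (Finset.univ.filter (fun π : Equiv.Perm (Fin n) =>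
      Avoids132 (fun i => (π i : ℕ)) ∧ count123 (fun i => (π i : ℕ)) = r ∧
      count12 (fun i => (π i : ℕ)) = s)).card := by
  rw [f, Nat.card_eq_fintype_card, Fintype.card_subtype]

noncomputable def Kof {n : ℕ} (π : Equiv.Perm (Fin n)) : ℕ :=
  if h : n = 0 then 0 else (π.symm ⟨n - 1, by omega⟩ : ℕ)

lemma Kof_lt {n : ℕ} (hn : 1 ≤ n) (π : Equiv.Perm (Fin n)) : Kof π < n := by
  rw [Kof, dif_neg (by omega : ¬ n = 0)]
  exact (π.symm ⟨n - 1, by omega⟩).isLt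

lemma Kof_max {n : ℕ} (hn : 1 ≤ n) (π : Equiv.Perm (Fin n)) {h : Kof π < n} :
    (π ⟨Kof π, h⟩ : ℕ) = n - 1 := by
  have h0 : ¬ n = 0 := by omega
  have e1 : (⟨Kof π, h⟩ : Fin n) = π.symm ⟨n - 1, by omega⟩ := by
    apply Fin.val_injective
    simp [Kof, dif_neg h0]
  rw [e1, Equiv.apply_symm_apply]

lemma Kof_eq {n : ℕ} (hn : 1 ≤ n) (π : Equiv.Perm (Fin n)) {K : ℕ} (hK : K < n)
    (hmax : (π ⟨K, hK⟩ : ℕ) = n - 1) : Kof π = K := by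
  have h0 : ¬ n = 0 := by omega
  rw [Kof, dif_neg h0]
  have : π.symm ⟨n - 1, by omega⟩ = ⟨K, hK⟩ := by
    rw [Equiv.symm_apply_eq]
    exact (Fin.val_injective hmax).symm
  rw [this]

noncomputable def phi {n : ℕ} (π : Equiv.Perm (Fin n)) : ℕ × ℕ × ℕ × ℕ × ℕ × ℕ :=
  (Kof π, n - 1 - Kof π,
   count123 (fun i : Fin (Kof π) => permVals π i - (n - 1 - Kof π)),
   count123 (fun i : Fin (n - 1 - Kof π) => permVals π (Kof π + 1 + i)),
   count12 (fun i : Fin (Kof π) => permVals π i - (n - 1 - Kof π)),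
   count12 (fun i : Fin (n - 1 - Kof π) => permVals π (Kof π + 1 + i)))

/-- decomposition of an avoiding permutation's value sequence -/
lemma decomp {n : ℕ} (hn : 1 ≤ n) (π : Equiv.Perm (Fin n))
    (hA : Avoids132 (fun i : Fin n => (π i : ℕ))) :
    ∀ i : Fin n, (π i : ℕ) =
      glueSeq (Kof π) (n - 1 - Kof π)
        (fun m => permVals π m - (n - 1 - Kof π))
        (fun m => permVals π (Kof π + 1 + m)) (i : ℕ) := by
  have hKn := Kof_lt hn π
  have hmax := Kof_max hn π (h := hKn)
  intro i
  rcases lt_trichotomy (i : ℕ) (Kof π) with h | h | h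
  · rw [glueSeq_left _ _ h]
    have h1 := (struct_left π hA hKn hmax i h).1
    have h2 := permVals_coe π i
    omega
  · have e : i = ⟨Kof π, hKn⟩ := Fin.val_injective h
    rw [h, glueSeq_mid, e, hmax]
    omega
  · rw [glueSeq_right _ _ h]
    have e : Kof π + 1 + ((i : ℕ) - (Kof π + 1)) = (i : ℕ) := by omega
    rw [e, permVals_coe]

lemma avoids_coe {n : ℕ} (π : Equiv.Perm (Fin n))
    (hA : Avoids132 (fun i : Fin n => (π i : ℕ))) :
    Avoids132 (fun i : Fin n => permVals π i) := by
  rw [show (fun i : Fin n => permVals π (i : ℕ)) = (fun i : Fin n => ((π i : ℕ)))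
    from funext (permVals_coe π)]
  exact hA

lemma split_mem {n n₁ n₂ r₁ r₂ s₁ s₂ : ℕ} (hn : 1 ≤ n) (hnn : n = n₁ + 1 + n₂)
    (π : Equiv.Perm (Fin n)) (hA : Avoids132 (fun i : Fin n => (π i : ℕ)))
    (hK : Kof π = n₁)
    (h3 : count123 (fun i : Fin (Kof π) => permVals π i - (n - 1 - Kof π)) = r₁)
    (h4 : count123 (fun i : Fin (n - 1 - Kof π) => permVals π (Kof π + 1 + i)) = r₂)
    (h5 : count12 (fun i : Fin (Kof π) => permVals π i - (n - 1 - Kof π)) = s₁)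
    (h6 : count12 (fun i : Fin (n - 1 - Kof π) => permVals π (Kof π + 1 + i)) = s₂) :
    (Avoids132 (fun i : Fin n₁ => ((lefty n₂ n₁ π) i : ℕ)) ∧
     count123 (fun i : Fin n₁ => ((lefty n₂ n₁ π) i : ℕ)) = r₁ ∧
     count12 (fun i : Fin n₁ => ((lefty n₂ n₁ π) i : ℕ)) = s₁) ∧
    (Avoids132 (fun i : Fin n₂ => ((righty n₁ n₂ π) i : ℕ)) ∧
     count123 (fun i : Fin n₂ => ((righty n₁ n₂ π) i : ℕ)) = r₂ ∧
     count12 (fun i : Fin n₂ => ((righty n₁ n₂ π) i : ℕ)) = s₂) := by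
  subst hK
  have hn₂ : n₂ = n - 1 - Kof π := by omega
  subst hn₂
  have hKn := Kof_lt hn π
  have hmax := Kof_max hn π (h := hKn)
  have hA' := avoids_coe π hA
  have hLspec := lefty_spec π (n - 1 - Kof π) (Kof π) (by omega)
    (fun m hm => by have := struct_left π hA hKn hmax m hm; omega)
  have hLeq : (fun i : Fin (Kof π) => ((lefty (n - 1 - Kof π) (Kof π) π) i : ℕ)) =
      (fun i : Fin (Kof π) => permVals π i - (n - 1 - Kof π)) := funext hLspec
  have hRspec := righty_spec π (Kof π) (n - 1 - Kof π) (by omega)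
    (fun m hm => struct_right π hA hKn hmax _ (by omega) (by omega))
  have hReq : (fun i : Fin (n - 1 - Kof π) => ((righty (Kof π) (n - 1 - Kof π) π) i : ℕ)) =
      (fun i : Fin (n - 1 - Kof π) => permVals π (Kof π + 1 + i)) := funext hRspec
  refine ⟨⟨?_, ?_, ?_⟩, ?_, ?_, ?_⟩
  · rw [hLeq]; exact avoids_sub (permVals π) (le_of_lt hKn) hA'
  · rw [hLeq]; exact h3
  · rw [hLeq]; exact h5
  · rw [hReq]; exact avoids_shift (permVals π) (by omega) hA'
  · rw [hReq]; exact h4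
  · rw [hReq]; exact h6

lemma glue_mem {n n₁ n₂ r r₁ r₂ s s₁ s₂ : ℕ} (hn : 1 ≤ n) (hnn : n = n₁ + 1 + n₂)
    (hr : r₁ + r₂ + s₁ = r) (hs : s₁ + s₂ + n₁ = s)
    (π₁ : Equiv.Perm (Fin n₁)) (π₂ : Equiv.Perm (Fin n₂))
    (hA₁ : Avoids132 (fun i : Fin n₁ => (π₁ i : ℕ)))
    (hr₁ : count123 (fun i : Fin n₁ => (π₁ i : ℕ)) = r₁)
    (hs₁ : count12 (fun i : Fin n₁ => (π₁ i : ℕ)) = s₁)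
    (hA₂ : Avoids132 (fun i : Fin n₂ => (π₂ i : ℕ)))
    (hr₂ : count123 (fun i : Fin n₂ => (π₂ i : ℕ)) = r₂)
    (hs₂ : count12 (fun i : Fin n₂ => (π₂ i : ℕ)) = s₂) :
    Avoids132 (fun i : Fin n => ((gluePerm n₁ n₂ π₁ π₂ : Equiv.Perm (Fin n)) i : ℕ)) ∧
    count123 (fun i : Fin n => ((gluePerm n₁ n₂ π₁ π₂ : Equiv.Perm (Fin n)) i : ℕ)) = r ∧
    count12 (fun i : Fin n => ((gluePerm n₁ n₂ π₁ π₂ : Equiv.Perm (Fin n)) i : ℕ)) = s ∧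
    phi (gluePerm n₁ n₂ π₁ π₂ : Equiv.Perm (Fin n)) = (n₁, n₂, r₁, r₂, s₁, s₂) := by
  set Pg : Equiv.Perm (Fin n) := gluePerm n₁ n₂ π₁ π₂ with hPg
  have hspec := gluePerm_spec hnn π₁ π₂
  have hfun : (fun i : Fin n => (Pg i : ℕ)) =
      (fun i : Fin n => glueSeq n₁ n₂ (permVals π₁) (permVals π₂) (i : ℕ)) := funext hspec
  have h₁ : ∀ m, m < n₁ → permVals π₁ m < n₁ := fun m hm => permVals_lt π₁ hm
  have h₂ : ∀ m, m < n₂ → permVals π₂ m < n₂ := fun m hm => permVals_lt π₂ hm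
  have hcoe1 : (fun i : Fin n₁ => permVals π₁ (i : ℕ)) = (fun i : Fin n₁ => ((π₁ i : ℕ))) :=
    funext (permVals_coe π₁)
  have hcoe2 : (fun i : Fin n₂ => permVals π₂ (i : ℕ)) = (fun i : Fin n₂ => ((π₂ i : ℕ))) :=
    funext (permVals_coe π₂)
  have hA₁' : Avoids132 (fun i : Fin n₁ => permVals π₁ (i : ℕ)) := by rw [hcoe1]; exact hA₁
  have hA₂' : Avoids132 (fun i : Fin n₂ => permVals π₂ (i : ℕ)) := by rw [hcoe2]; exact hA₂
  have hc123_1 : count123 (fun i : Fin n₁ => permVals π₁ (i : ℕ)) = r₁ := by rw [hcoe1]; exact hr₁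
  have hc123_2 : count123 (fun i : Fin n₂ => permVals π₂ (i : ℕ)) = r₂ := by rw [hcoe2]; exact hr₂
  have hc12_1 : count12 (fun i : Fin n₁ => permVals π₁ (i : ℕ)) = s₁ := by rw [hcoe1]; exact hs₁
  have hc12_2 : count12 (fun i : Fin n₂ => permVals π₂ (i : ℕ)) = s₂ := by rw [hcoe2]; exact hs₂
  have hC123 : count123 (fun i : Fin n => glueSeq n₁ n₂ (permVals π₁) (permVals π₂) (i : ℕ)) =
      count123 (fun i : Fin n₁ => permVals π₁ (i : ℕ)) +
      count123 (fun i : Fin n₂ => permVals π₂ (i : ℕ)) +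
      count12 (fun i : Fin n₁ => permVals π₁ (i : ℕ)) := count123_glue hnn _ _ h₁ h₂
  have hC12 : count12 (fun i : Fin n => glueSeq n₁ n₂ (permVals π₁) (permVals π₂) (i : ℕ)) =
      count12 (fun i : Fin n₁ => permVals π₁ (i : ℕ)) +
      count12 (fun i : Fin n₂ => permVals π₂ (i : ℕ)) + n₁ := count12_glue hnn _ _ h₁ h₂
  have hpv : ∀ m, m < n → permVals Pg m = glueSeq n₁ n₂ (permVals π₁) (permVals π₂) m := by
    intro m hm
    simp only [permVals, dif_pos hm]
    exact hspec ⟨m, hm⟩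
  have hKg : Kof Pg = n₁ := by
    refine Kof_eq hn Pg (by omega) ?_
    have := hspec ⟨n₁, by omega⟩
    rw [this]
    show glueSeq n₁ n₂ (permVals π₁) (permVals π₂) n₁ = n - 1
    rw [glueSeq_mid]; omega
  have hn2g : n - 1 - Kof Pg = n₂ := by omega
  have c3 : count123 (fun i : Fin (Kof Pg) => permVals Pg i - (n - 1 - Kof Pg)) = r₁ := by
    have e1 : count123 (fun i : Fin (Kof Pg) => permVals Pg i - (n - 1 - Kof Pg)) =
        count123 (fun i : Fin n₁ => permVals Pg i - (n - 1 - Kof Pg)) :=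
      count123_cast hKg (fun m => permVals Pg m - (n - 1 - Kof Pg))
    have e2 : count123 (fun i : Fin n₁ => permVals Pg i - (n - 1 - Kof Pg)) =
        count123 (fun i : Fin n₁ => permVals π₁ i) := by
      refine count123_congr (A := fun m => permVals Pg m - (n - 1 - Kof Pg))
        (B := fun m => permVals π₁ m) (fun m hm => ?_)
      rw [hpv m (by omega), glueSeq_left _ _ hm]
      omega
    rw [e1, e2]; exact hc123_1
  have c5 : count12 (fun i : Fin (Kof Pg) => permVals Pg i - (n - 1 - Kof Pg)) = s₁ := by
    have e1 : count12 (fun i : Fin (Kof Pg) => permVals Pg i - (n - 1 - Kof Pg)) =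
        count12 (fun i : Fin n₁ => permVals Pg i - (n - 1 - Kof Pg)) :=
      count12_cast hKg (fun m => permVals Pg m - (n - 1 - Kof Pg))
    have e2 : count12 (fun i : Fin n₁ => permVals Pg i - (n - 1 - Kof Pg)) =
        count12 (fun i : Fin n₁ => permVals π₁ i) := by
      refine count12_congr (A := fun m => permVals Pg m - (n - 1 - Kof Pg))
        (B := fun m => permVals π₁ m) (fun m hm => ?_)
      rw [hpv m (by omega), glueSeq_left _ _ hm]
      omega
    rw [e1, e2]; exact hc12_1
  have ehelp : ∀ m, m < n₂ → permVals Pg (Kof Pg + 1 + m) = permVals π₂ m := by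
    intro m hm
    rw [hpv _ (by omega), glueSeq_right _ _ (by omega)]
    congr 1
    omega
  have c4 : count123 (fun i : Fin (n - 1 - Kof Pg) => permVals Pg (Kof Pg + 1 + i)) = r₂ := by
    have e1 : count123 (fun i : Fin (n - 1 - Kof Pg) => permVals Pg (Kof Pg + 1 + i)) =
        count123 (fun i : Fin n₂ => permVals Pg (Kof Pg + 1 + i)) :=
      count123_cast hn2g (fun m => permVals Pg (Kof Pg + 1 + m))
    have e2 : count123 (fun i : Fin n₂ => permVals Pg (Kof Pg + 1 + i)) =
        count123 (fun i : Fin n₂ => permVals π₂ i) :=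
      count123_congr (A := fun m => permVals Pg (Kof Pg + 1 + m)) (B := fun m => permVals π₂ m) ehelp
    rw [e1, e2]; exact hc123_2
  have c6 : count12 (fun i : Fin (n - 1 - Kof Pg) => permVals Pg (Kof Pg + 1 + i)) = s₂ := by
    have e1 : count12 (fun i : Fin (n - 1 - Kof Pg) => permVals Pg (Kof Pg + 1 + i)) =
        count12 (fun i : Fin n₂ => permVals Pg (Kof Pg + 1 + i)) :=
      count12_cast hn2g (fun m => permVals Pg (Kof Pg + 1 + m))
    have e2 : count12 (fun i : Fin n₂ => permVals Pg (Kof Pg + 1 + i)) =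
        count12 (fun i : Fin n₂ => permVals π₂ i) :=
      count12_congr (A := fun m => permVals Pg (Kof Pg + 1 + m)) (B := fun m => permVals π₂ m) ehelp
    rw [e1, e2]; exact hc12_2
  refine ⟨?_, ?_, ?_, ?_⟩
  · rw [hfun]; exact avoids132_glue hnn _ _ h₁ h₂ hA₁' hA₂'
  · rw [hfun, hC123, hc123_1, hc123_2, hc12_1]; exact hr
  · rw [hfun, hC12, hc12_1, hc12_2]; exact hs
  · simp only [phi, Prod.mk.injEq]
    exact ⟨hKg, hn2g, c3, c4, c5, c6⟩

/-- For `n ≥ 1`, `f(n,r,s) = Σ f(n₁,r₁,s₁)·f(n₂,r₂,s₂)`, summed over all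
nonnegative integers `n₁,n₂,r₁,r₂,s₁,s₂` with `n₁+n₂ = n-1`,
`r₁+r₂+s₁ = r` and `s₁+s₂+n₁ = s` (the ranges below contain every tuple
satisfying these constraints); moreover `f(0,r,s) = 1` if `r = s = 0`
and `= 0` otherwise. -/
theorem stmt5 :
    (∀ n r s : ℕ, 1 ≤ n →
      f n r s =
        ∑ x ∈ (Finset.range n ×ˢ Finset.range n ×ˢ Finset.range (r + 1) ×ˢ
            Finset.range (r + 1) ×ˢ Finset.range (r + 1) ×ˢ
            Finset.range (s + 1)).filter
            (fun x : ℕ × ℕ × ℕ × ℕ × ℕ × ℕ =>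
              x.1 + x.2.1 = n - 1 ∧
              x.2.2.1 + x.2.2.2.1 + x.2.2.2.2.1 = r ∧
              x.2.2.2.2.1 + x.2.2.2.2.2 + x.1 = s),
          f x.1 x.2.2.1 x.2.2.2.2.1 * f x.2.1 x.2.2.2.1 x.2.2.2.2.2) ∧
    (∀ r s : ℕ, f 0 r s = if r = 0 ∧ s = 0 then 1 else 0) := by
  constructor
  · intro n r s hn
    rw [f_eq]
    have hmem : ∀ π ∈ Finset.univ.filter (fun π : Equiv.Perm (Fin n) =>
        Avoids132 (fun i => (π i : ℕ)) ∧ count123 (fun i => (π i : ℕ)) = r ∧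
        count12 (fun i => (π i : ℕ)) = s),
        phi π ∈ (Finset.range n ×ˢ Finset.range n ×ˢ Finset.range (r + 1) ×ˢ
            Finset.range (r + 1) ×ˢ Finset.range (r + 1) ×ˢ
            Finset.range (s + 1)).filter
            (fun x : ℕ × ℕ × ℕ × ℕ × ℕ × ℕ =>
              x.1 + x.2.1 = n - 1 ∧
              x.2.2.1 + x.2.2.2.1 + x.2.2.2.2.1 = r ∧
              x.2.2.2.2.1 + x.2.2.2.2.2 + x.1 = s) := by
      intro π hπ
      simp only [Finset.mem_filter, Finset.mem_univ, true_and] at hπ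
      obtain ⟨hA, hr, hs⟩ := hπ
      have hKn := Kof_lt hn π
      have hmax := Kof_max hn π (h := hKn)
      have hNN : n = Kof π + 1 + (n - 1 - Kof π) := by omega
      have h₁ : ∀ m, m < Kof π → permVals π m - (n - 1 - Kof π) < Kof π := by
        intro m hm; have := struct_left π hA hKn hmax m hm; omega
      have h₂ : ∀ m, m < n - 1 - Kof π → permVals π (Kof π + 1 + m) < n - 1 - Kof π := by
        intro m hm; exact struct_right π hA hKn hmax _ (by omega) (by omega)
      have hfun : (fun i : Fin n => (π i : ℕ)) =
          (fun i : Fin n => glueSeq (Kof π) (n - 1 - Kof π)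
            (fun m => permVals π m - (n - 1 - Kof π))
            (fun m => permVals π (Kof π + 1 + m)) (i : ℕ)) := funext (decomp hn π hA)
      have hc123 : count123 (fun i : Fin n => (π i : ℕ)) =
          count123 (fun i : Fin (Kof π) => permVals π i - (n - 1 - Kof π)) +
          count123 (fun i : Fin (n - 1 - Kof π) => permVals π (Kof π + 1 + i)) +
          count12 (fun i : Fin (Kof π) => permVals π i - (n - 1 - Kof π)) := by
        rw [hfun]; exact count123_glue hNN _ _ h₁ h₂
      have hc12 : count12 (fun i : Fin n => (π i : ℕ)) =
          count12 (fun i : Fin (Kof π) => permVals π i - (n - 1 - Kof π)) +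
          count12 (fun i : Fin (n - 1 - Kof π) => permVals π (Kof π + 1 + i)) + Kof π := by
        rw [hfun]; exact count12_glue hNN _ _ h₁ h₂
      rw [hr] at hc123
      rw [hs] at hc12
      simp only [Finset.mem_filter, Finset.mem_product, Finset.mem_range, phi]
      refine ⟨⟨by omega, by omega, by omega, by omega, by omega, by omega⟩,
        by omega, by omega, by omega⟩
    rw [Finset.card_eq_sum_card_fiberwise hmem]
    refine Finset.sum_congr rfl ?_
    rintro ⟨n₁, n₂, r₁, r₂, s₁, s₂⟩ hx
    simp only [Finset.mem_filter, Finset.mem_product, Finset.mem_range] at hx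
    obtain ⟨⟨hxn₁, hxn₂, hxr₁, hxr₂, hxs₁, hxs₂⟩, hsum1, hsum2, hsum3⟩ := hx
    rw [f_eq, f_eq, ← Finset.card_product]
    have hnn : n = n₁ + 1 + n₂ := by omega
    refine Finset.card_bij' (fun π _ => (lefty n₂ n₁ π, righty n₁ n₂ π))
      (fun p _ => (gluePerm n₁ n₂ p.1 p.2 : Equiv.Perm (Fin n))) ?_ ?_ ?_ ?_
    · -- forward membership
      intro π hπ
      simp only [Finset.mem_filter, Finset.mem_univ, true_and] at hπ
      obtain ⟨⟨hA, hr, hs⟩, hphi⟩ := hπ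
      have hK : Kof π = n₁ := congrArg Prod.fst hphi
      have h3 : count123 (fun i : Fin (Kof π) => permVals π i - (n - 1 - Kof π)) = r₁ :=
        congrArg (fun t : ℕ × ℕ × ℕ × ℕ × ℕ × ℕ => t.2.2.1) hphi
      have h4 : count123 (fun i : Fin (n - 1 - Kof π) => permVals π (Kof π + 1 + i)) = r₂ :=
        congrArg (fun t : ℕ × ℕ × ℕ × ℕ × ℕ × ℕ => t.2.2.2.1) hphi
      have h5 : count12 (fun i : Fin (Kof π) => permVals π i - (n - 1 - Kof π)) = s₁ :=
        congrArg (fun t : ℕ × ℕ × ℕ × ℕ × ℕ × ℕ => t.2.2.2.2.1) hphi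
      have h6 : count12 (fun i : Fin (n - 1 - Kof π) => permVals π (Kof π + 1 + i)) = s₂ :=
        congrArg (fun t : ℕ × ℕ × ℕ × ℕ × ℕ × ℕ => t.2.2.2.2.2) hphi
      have := split_mem hn hnn π hA hK h3 h4 h5 h6
      simp only [Finset.mem_product, Finset.mem_filter, Finset.mem_univ, true_and]
      exact this
    · -- backward membership
      intro p hp
      simp only [Finset.mem_product, Finset.mem_filter, Finset.mem_univ, true_and] at hp
      obtain ⟨⟨hA₁, hr₁, hs₁⟩, hA₂, hr₂, hs₂⟩ := hp
      obtain ⟨gA, gr, gs, gphi⟩ := glue_mem hn hnn hsum2 hsum3 p.1 p.2 hA₁ hr₁ hs₁ hA₂ hr₂ hs₂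
      simp only [Finset.mem_filter, Finset.mem_univ, true_and]
      exact ⟨⟨gA, gr, gs⟩, gphi⟩
    · -- left inverse : glue (split π) = π
      intro π hπ
      simp only [Finset.mem_filter, Finset.mem_univ, true_and] at hπ
      obtain ⟨⟨hA, hr, hs⟩, hphi⟩ := hπ
      have hK : Kof π = n₁ := congrArg Prod.fst hphi
      have hKn := Kof_lt hn π
      have hmax := Kof_max hn π (h := hKn)
      have hn2 : n - 1 - Kof π = n₂ := by omega
      have hLspec := lefty_spec π n₂ n₁ (by omega)
        (fun m hm => by have := struct_left π hA hKn hmax m (by omega); omega)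
      have hRspec := righty_spec π n₁ n₂ (by omega)
        (fun m hm => by
          have := struct_right π hA hKn hmax (n₁ + 1 + m) (by omega) (by omega); omega)
      apply Equiv.ext
      intro i
      apply Fin.val_injective
      dsimp only
      rw [gluePerm_spec hnn _ _ i]
      rcases lt_trichotomy (i : ℕ) n₁ with h | h | h
      · rw [glueSeq_left _ _ h]
        have e1 : permVals (lefty n₂ n₁ π) (i : ℕ) = ((lefty n₂ n₁ π) ⟨(i : ℕ), h⟩ : ℕ) := by
          simp only [permVals, dif_pos h]
        have e2 := hLspec ⟨(i : ℕ), h⟩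
        dsimp only at e2
        have e3 := permVals_coe π i
        have e4 := (struct_left π hA hKn hmax (i : ℕ) (by omega)).1
        omega
      · have emax : (π i : ℕ) = n - 1 := by
          rw [show i = ⟨Kof π, hKn⟩ from Fin.val_injective (show (i : ℕ) = Kof π by omega)]
          exact hmax
        rw [h, glueSeq_mid]
        omega
      · rw [glueSeq_right _ _ h]
        have hlt : (i : ℕ) - (n₁ + 1) < n₂ := by omega
        have e1 : permVals (righty n₁ n₂ π) ((i : ℕ) - (n₁ + 1)) =
            ((righty n₁ n₂ π) ⟨(i : ℕ) - (n₁ + 1), hlt⟩ : ℕ) := by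
          simp only [permVals, dif_pos hlt]
        have e2 := hRspec ⟨(i : ℕ) - (n₁ + 1), hlt⟩
        dsimp only at e2
        have e5 : n₁ + 1 + ((i : ℕ) - (n₁ + 1)) = (i : ℕ) := by omega
        rw [e5] at e2
        have e3 := permVals_coe π i
        omega
    · -- right inverse : split (glue p) = p
      intro p hp
      have hspec := gluePerm_spec hnn p.1 p.2
      have hpv : ∀ m, m < n → permVals (gluePerm n₁ n₂ p.1 p.2 : Equiv.Perm (Fin n)) m =
          glueSeq n₁ n₂ (permVals p.1) (permVals p.2) m := by
        intro m hm
        simp only [permVals, dif_pos hm]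
        exact hspec ⟨m, hm⟩
      have hLb : ∀ m, m < n₁ →
          n₂ ≤ permVals (gluePerm n₁ n₂ p.1 p.2 : Equiv.Perm (Fin n)) m ∧
          permVals (gluePerm n₁ n₂ p.1 p.2 : Equiv.Perm (Fin n)) m < n₂ + n₁ := by
        intro m hm
        rw [hpv m (by omega), glueSeq_left _ _ hm]
        have := permVals_lt p.1 hm
        omega
      have hRb : ∀ m, m < n₂ →
          permVals (gluePerm n₁ n₂ p.1 p.2 : Equiv.Perm (Fin n)) (n₁ + 1 + m) < n₂ := by
        intro m hm
        rw [hpv _ (by omega), glueSeq_right _ _ (by omega)]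
        have e : n₁ + 1 + m - (n₁ + 1) = m := by omega
        rw [e]
        exact permVals_lt p.2 hm
      have hLspec := lefty_spec (gluePerm n₁ n₂ p.1 p.2 : Equiv.Perm (Fin n)) n₂ n₁ (by omega) hLb
      have hRspec := righty_spec (gluePerm n₁ n₂ p.1 p.2 : Equiv.Perm (Fin n)) n₁ n₂ (by omega) hRb
      refine Prod.ext ?_ ?_
      · apply Equiv.ext
        intro i
        apply Fin.val_injective
        dsimp only
        rw [hLspec i, hpv (i : ℕ) (by omega), glueSeq_left _ _ i.isLt]
        have := permVals_coe p.1 i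
        omega
      · apply Equiv.ext
        intro i
        apply Fin.val_injective
        dsimp only
        rw [hRspec i, hpv _ (by omega), glueSeq_right _ _ (by omega)]
        have e : n₁ + 1 + (i : ℕ) - (n₁ + 1) = (i : ℕ) := by omega
        rw [e]
        exact permVals_coe p.2 i
  · intro r s
    have hc123 : ∀ π : Equiv.Perm (Fin 0), count123 (fun i => (π i : ℕ)) = 0 := by
      intro π
      rw [count123]
      simp
    have hc12 : ∀ π : Equiv.Perm (Fin 0), count12 (fun i => (π i : ℕ)) = 0 := by
      intro π
      rw [count12]
      simp
    by_cases h : r = 0 ∧ s = 0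
    · obtain ⟨rfl, rfl⟩ := h
      rw [if_pos ⟨rfl, rfl⟩, f, Nat.card_eq_fintype_card, Fintype.card_subtype]
      rw [Finset.filter_true_of_mem (fun π _ => ⟨fun i => i.elim0, hc123 π, hc12 π⟩)]
      simp [Finset.card_univ]
    · rw [if_neg h, f]
      have : IsEmpty {π : Equiv.Perm (Fin 0) //
          Avoids132 (fun i => (π i : ℕ)) ∧ count123 (fun i => (π i : ℕ)) = r ∧
          count12 (fun i => (π i : ℕ)) = s} := by
        refine ⟨fun ⟨π, _, h2, h3⟩ => ?_⟩
        rw [hc123 π] at h2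
        rw [hc12 π] at h3
        exact h ⟨h2.symm, h3.symm⟩
      exact Nat.card_of_isEmpty
end

section
/- Let φ₀ = 1 and, for m ≥ 1, let φ_m(q,t) ∈ ℤ[[q,t]] be the unique solution of φ_m(q,t) = t^m·φ_m(q,qt) − t^{2m−2}·q^{m−1}·φ_{m−1}(q,tq²). Then for every m ≥ 1, φ_m(q,t) = −Σ_{j≥2} t^{jm−2} · q^{m·binomial(j,2) − 2j + 3} · φ_{m−1}(q, t·q^j), where the sum over j ≥ 2 converges coefficientwise (only finitely many terms contribute to any fixed monomial). -/
/-- The monomial substitution `t ↦ t·q^j` on `ℤ[[q,t]]` (variables: `0 ↦ q`,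
`1 ↦ t`): each monomial `q^a t^c` is replaced by `q^{a+jc} t^c`.
Coefficientwise: the coefficient of `q^A t^C` in `substT j F` is the
coefficient of `q^{A-jC} t^C` in `F` when `jC ≤ A`, and `0` otherwise. -/
noncomputable def substT (j : ℕ) (F : MvPowerSeries (Fin 2) ℤ) :
    MvPowerSeries (Fin 2) ℤ :=
  fun d =>
    if j * d 1 ≤ d 0 then
      F (Finsupp.single 0 (d 0 - j * d 1) + Finsupp.single 1 (d 1))
    else 0

lemma coeff_substT (j : ℕ) (F : MvPowerSeries (Fin 2) ℤ) (p : Fin 2 →₀ ℕ) :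
    MvPowerSeries.coeff p (substT j F) =
      if j * p 1 ≤ p 0 then
        MvPowerSeries.coeff (Finsupp.single 0 (p 0 - j * p 1) + Finsupp.single 1 (p 1)) F
      else 0 := rfl

lemma pt0 (x y : ℕ) : (Finsupp.single (0 : Fin 2) x + Finsupp.single (1 : Fin 2) y) 0 = x := by
  simp

lemma pt1 (x y : ℕ) : (Finsupp.single (0 : Fin 2) x + Finsupp.single (1 : Fin 2) y) 1 = y := by
  simp

lemma coeff_congr (F : MvPowerSeries (Fin 2) ℤ) {x y x' y' : ℕ} (hx : x = x') (hy : y = y') :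
    MvPowerSeries.coeff (Finsupp.single 0 x + Finsupp.single 1 y) F =
      MvPowerSeries.coeff (Finsupp.single 0 x' + Finsupp.single 1 y') F := by
  rw [hx, hy]

lemma key (k e j : ℕ) (F : MvPowerSeries (Fin 2) ℤ) (d : Fin 2 →₀ ℕ) :
    MvPowerSeries.coeff d (MvPowerSeries.X 1 ^ k * MvPowerSeries.X 0 ^ e * substT j F) =
      if k ≤ d 1 ∧ e + j * (d 1 - k) ≤ d 0 then
        MvPowerSeries.coeff
          (Finsupp.single 0 (d 0 - e - j * (d 1 - k)) + Finsupp.single 1 (d 1 - k)) F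
      else 0 := by
  rw [MvPowerSeries.X_pow_eq, MvPowerSeries.X_pow_eq, MvPowerSeries.monomial_mul_monomial,
    one_mul, MvPowerSeries.coeff_monomial_mul]
  have hle : (Finsupp.single (1 : Fin 2) k + Finsupp.single 0 e ≤ d) ↔ (k ≤ d 1 ∧ e ≤ d 0) := by
    rw [Finsupp.le_def, Fin.forall_fin_two]
    simp [Finsupp.add_apply, Finsupp.single_apply]
    tauto
  by_cases h : Finsupp.single (1 : Fin 2) k + Finsupp.single 0 e ≤ d
  · rw [if_pos h, one_mul, coeff_substT]
    have h0 : ((d - (Finsupp.single (1 : Fin 2) k + Finsupp.single 0 e) : Fin 2 →₀ ℕ)) 0 = d 0 - e := by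
      simp [Finsupp.tsub_apply, Finsupp.add_apply, Finsupp.single_apply]
    have h1 : ((d - (Finsupp.single (1 : Fin 2) k + Finsupp.single 0 e) : Fin 2 →₀ ℕ)) 1 = d 1 - k := by
      simp [Finsupp.tsub_apply, Finsupp.add_apply, Finsupp.single_apply]
    rw [h0, h1]
    obtain ⟨hk, he⟩ := hle.mp h
    by_cases h2 : j * (d 1 - k) ≤ d 0 - e
    · rw [if_pos h2, if_pos ⟨hk, by omega⟩]
      
    · rw [if_neg h2, if_neg (by omega)]
  · rw [if_neg h, if_neg]
    rw [hle] at h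
    omega

lemma twoj_le (j : ℕ) (hj : 2 ≤ j) : 2 * j ≤ Nat.choose j 2 + 3 := by
  induction j, hj using Nat.le_induction with
  | base => decide
  | succ j hj ih =>
    have h : Nat.choose (j + 1) 2 = Nat.choose j 1 + Nat.choose j 2 := Nat.choose_succ_succ' j 1
    rw [Nat.choose_one_right] at h
    omega

lemma shift (F : MvPowerSeries (Fin 2) ℤ) (m j : ℕ) (hm : 1 ≤ m) (hj : 2 ≤ j)
    (d : Fin 2 →₀ ℕ) (hc : m ≤ d 1) :
    MvPowerSeries.coeff d
        (MvPowerSeries.X 1 ^ ((j + 1) * m - 2) *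
          MvPowerSeries.X 0 ^ (m * Nat.choose (j + 1) 2 + 3 - 2 * (j + 1)) *
          substT (j + 1) F) =
      if d 1 - m ≤ d 0 then
        MvPowerSeries.coeff
          (Finsupp.single 0 (d 0 - (d 1 - m)) + Finsupp.single 1 (d 1 - m))
          (MvPowerSeries.X 1 ^ (j * m - 2) *
            MvPowerSeries.X 0 ^ (m * Nat.choose j 2 + 3 - 2 * j) *
            substT j F)
      else 0 := by
  have hCj : Nat.choose (j + 1) 2 = j + Nat.choose j 2 := by
    have h : Nat.choose (j + 1) 2 = Nat.choose j 1 + Nat.choose j 2 := Nat.choose_succ_succ' j 1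
    rw [Nat.choose_one_right] at h
    exact h
  have hC3 : 2 * j ≤ Nat.choose j 2 + 3 := twoj_le j hj
  have hE : Nat.choose j 2 ≤ m * Nat.choose j 2 := Nat.le_mul_of_pos_left _ hm
  have hP : 2 ≤ j * m := le_trans (by omega) (Nat.mul_le_mul hj hm)
  have hcm : m * j = j * m := mul_comm m j
  simp only [key, pt0, pt1, hCj]
  have hjm : (j + 1) * m = j * m + m := by ring
  have hmm : m * (j + Nat.choose j 2) = m * j + m * Nat.choose j 2 := by ring
  rw [hjm, hmm]
  have huu : d 1 - (j * m + m - 2) = d 1 - m - (j * m - 2) := by omega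
  rw [huu]
  have hsplit : (j + 1) * (d 1 - m - (j * m - 2)) =
      j * (d 1 - m - (j * m - 2)) + (d 1 - m - (j * m - 2)) := by ring
  rw [hsplit]
  split_ifs with h1 h2 h3 <;>
    first
      | rfl
      | (exact coeff_congr F (by omega) (by omega))
      | (exfalso; omega)

/-- Let `φ₀ = 1` and, for `m ≥ 1`, let `φ_m(q,t) ∈ ℤ[[q,t]]` satisfy the
recurrence `φ_m(q,t) = t^m·φ_m(q,qt) - t^{2m-2}·q^{m-1}·φ_{m-1}(q,tq²)`
(which determines each `φ_m` uniquely).  Then for every `m ≥ 1`,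
`φ_m(q,t) = -Σ_{j≥2} t^{jm-2} · q^{m·binomial(j,2)-2j+3} · φ_{m-1}(q,t·q^j)`,
where the sum over `j ≥ 2` converges coefficientwise: the term for `j`
contributes to the coefficient of a monomial with `t`-degree `d 1` only when
`j ≤ d 1 + 2`, so truncating the sum at any bound `N ≥ d 1 + 2` gives the
exact coefficient.  (The exponent `m·binomial(j,2)-2j+3` is the nonnegative
integer `m·binomial(j,2)+3-2j`.) -/
theorem stmt11 (φ : ℕ → MvPowerSeries (Fin 2) ℤ) (hφ0 : φ 0 = 1)
    (hφ : ∀ m : ℕ, 1 ≤ m →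
      φ m = (MvPowerSeries.X 1) ^ m * substT 1 (φ m) -
        (MvPowerSeries.X 1) ^ (2 * m - 2) * (MvPowerSeries.X 0) ^ (m - 1) *
          substT 2 (φ (m - 1))) :
    ∀ m : ℕ, 1 ≤ m → ∀ d : Fin 2 →₀ ℕ, ∀ N : ℕ, d 1 + 2 ≤ N →
      MvPowerSeries.coeff d (φ m) =
        - ∑ j ∈ Finset.Icc 2 N,
            MvPowerSeries.coeff d
              ((MvPowerSeries.X 1) ^ (j * m - 2) *
                (MvPowerSeries.X 0) ^ (m * Nat.choose j 2 + 3 - 2 * j) *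
                substT j (φ (m - 1))) := by
  
  intro m hm
  suffices H : ∀ c : ℕ, ∀ d : Fin 2 →₀ ℕ, d 1 = c → ∀ N : ℕ, d 1 + 2 ≤ N →
      MvPowerSeries.coeff d (φ m) =
        - ∑ j ∈ Finset.Icc 2 N,
            MvPowerSeries.coeff d
              ((MvPowerSeries.X 1) ^ (j * m - 2) *
                (MvPowerSeries.X 0) ^ (m * Nat.choose j 2 + 3 - 2 * j) *
                substT j (φ (m - 1))) by
    exact fun d N hN => H (d 1) d rfl N hN
  intro c
  induction c using Nat.strong_induction_on with
  | _ c ih =>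
  intro d hd N hN
  -- shorthand for the induction hypothesis
  have ih' : ∀ d' : Fin 2 →₀ ℕ, d' 1 < d 1 → ∀ N' : ℕ, d' 1 + 2 ≤ N' →
      MvPowerSeries.coeff d' (φ m) =
        - ∑ j ∈ Finset.Icc 2 N',
            MvPowerSeries.coeff d'
              ((MvPowerSeries.X 1) ^ (j * m - 2) *
                (MvPowerSeries.X 0) ^ (m * Nat.choose j 2 + 3 - 2 * j) *
                substT j (φ (m - 1))) := by
    intro d' h N' hN'
    exact ih (d' 1) (hd ▸ h) d' rfl N' hN'
  clear ih hd
  rw [hφ m hm, map_sub]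
  have hIns : Finset.Icc 2 N = insert 2 (Finset.Icc 3 N) := by
    ext x
    simp only [Finset.mem_Icc, Finset.mem_insert]
    omega
  rw [hIns, Finset.sum_insert (by simp)]
  rw [show m * Nat.choose 2 2 + 3 - 2 * 2 = m - 1 by rw [Nat.choose_self, mul_one]; omega]
  rw [show (2 : ℕ) * m - 2 = 2 * m - 2 from rfl]
  have main : MvPowerSeries.coeff d ((MvPowerSeries.X 1) ^ m * substT 1 (φ m)) =
      - ∑ j ∈ Finset.Icc 3 N,
          MvPowerSeries.coeff d
            ((MvPowerSeries.X 1) ^ (j * m - 2) *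
              (MvPowerSeries.X 0) ^ (m * Nat.choose j 2 + 3 - 2 * j) *
              substT j (φ (m - 1))) := by
    rw [show (MvPowerSeries.X 1 : MvPowerSeries (Fin 2) ℤ) ^ m * substT 1 (φ m) =
        MvPowerSeries.X 1 ^ m * MvPowerSeries.X 0 ^ 0 * substT 1 (φ m) by
      rw [pow_zero, mul_one]]
    rw [key]
    simp only [zero_add, one_mul, Nat.sub_zero]
    rcases lt_or_ge (d 1) m with hcm | hmc
    · rw [if_neg (by omega)]
      rw [eq_comm, neg_eq_zero]
      apply Finset.sum_eq_zero
      intro j hj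
      rw [Finset.mem_Icc] at hj
      have h3 : 3 * m ≤ j * m := Nat.mul_le_mul_right m (by omega)
      rw [key, if_neg (by omega)]
    · -- reindex the sum
      rw [show Finset.Icc 3 N = Finset.map (addRightEmbedding 1) (Finset.Icc 2 (N - 1)) by
        rw [Finset.map_add_right_Icc]; congr 1 <;> omega]
      rw [Finset.sum_map]
      simp only [addRightEmbedding_apply]
      by_cases hle : d 1 - m ≤ d 0
      · rw [if_pos ⟨hmc, hle⟩]
        rw [ih' (Finsupp.single 0 (d 0 - (d 1 - m)) + Finsupp.single 1 (d 1 - m))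
          (by rw [pt1]; omega) (N - 1) (by rw [pt1]; omega)]
        congr 1
        apply Finset.sum_congr rfl
        intro j hj
        rw [Finset.mem_Icc] at hj
        rw [shift (φ (m - 1)) m j hm hj.1 d hmc, if_pos hle]
      · rw [if_neg (by omega)]
        rw [eq_comm, neg_eq_zero]
        apply Finset.sum_eq_zero
        intro j hj
        rw [Finset.mem_Icc] at hj
        rw [shift (φ (m - 1)) m j hm hj.1 d hmc, if_neg hle]
  rw [main]
  ring
end

section
/- Let B(q,z,t) = Σ_{m≥0} φ_m(q,t) z^m ∈ ℤ[[q,z,t]], where φ₀ = 1 and for m ≥ 1, φ_m is the unique solution of φ_m(q,t) = t^m·φ_m(q,qt) − t^{2m−2}·q^{m−1}·φ_{m−1}(q,tq²). Then B is given explicitly by B(q,z,t) = 1 + Σ_{m≥1} (−1)^m z^m Σ_{j₁,…,j_m ≥ 2} t^{(Σ_{r=1}^m r·j_r) − 2m} · q^{(Σ_{r,s=1}^m min(r,s)·j_r·j_s − 5·Σ_{r=1}^m r·j_r)/2 + 3m}, where all exponents occurring are nonnegative integers and the inner sum converges coefficientwise (only finitely many tuples (j₁,…,j_m) contribute to any fixed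 monomial). -/
/-- `B(q,z,t) = Σ_{m≥0} φ_m(q,t) z^m ∈ ℤ[[q,z,t]]` (variables: `0 ↦ q`,
`1 ↦ z`, `2 ↦ t`): the coefficient of `q^a z^m t^c` in `B` is the coefficient
of `q^a t^c` in `φ_m`. -/
noncomputable def Bser (φ : ℕ → MvPowerSeries (Fin 2) ℤ) :
    MvPowerSeries (Fin 3) ℤ :=
  fun d =>
    MvPowerSeries.coeff (R := ℤ) (Finsupp.single 0 (d 0) + Finsupp.single 1 (d 2))
      (φ (d 1))

/-- The linear form `Σ_{r=1}^m r·j_r` (indices `r` written 1-based). -/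
def S1 {m : ℕ} (j : Fin m → ℕ) : ℕ := ∑ r : Fin m, (r.1 + 1) * j r

/-- The quadratic form `Σ_{r,s=1}^m min(r,s)·j_r·j_s` (indices 1-based). -/
def S2 {m : ℕ} (j : Fin m → ℕ) : ℕ :=
  ∑ r : Fin m, ∑ s : Fin m, min (r.1 + 1) (s.1 + 1) * j r * j s

/-- partial tail sums -/
def Tl {m : ℕ} (j : Fin m → ℕ) (l : Fin m) : ℕ :=
  ∑ r : Fin m, if l.1 ≤ r.1 then j r else 0

lemma sum_ite_le (m k : ℕ) (h : k < m) :
    ∑ i ∈ Finset.range m, (if i ≤ k then 1 else 0) = k + 1 := by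
  induction m with
  | zero => omega
  | succ n ih =>
    rw [Finset.sum_range_succ]
    rcases Nat.lt_or_ge k n with h' | h'
    · rw [ih h', if_neg (by omega)]
    · have hk : k = n := by omega
      rw [hk, if_pos le_rfl]
      have h2 : ∀ i ∈ Finset.range n, (if i ≤ n then 1 else 0) = 1 := by
        intro i hi
        rw [if_pos (by simp at hi; omega)]
      rw [Finset.sum_congr rfl h2, Finset.sum_const, Finset.card_range]; simp

lemma count_le (m : ℕ) (r : Fin m) :
    ∑ l : Fin m, (if l.1 ≤ r.1 then 1 else 0) = r.1 + 1 := by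
  rw [Fin.sum_univ_eq_sum_range (fun i => if i ≤ r.1 then 1 else 0)]
  exact sum_ite_le m r.1 r.2

lemma S1_eq_sum_Tl {m : ℕ} (j : Fin m → ℕ) : S1 j = ∑ l : Fin m, Tl j l := by
  unfold S1 Tl
  rw [Finset.sum_comm]
  refine Finset.sum_congr rfl fun r _ => ?_
  rw [← count_le m r, Finset.sum_mul]
  refine Finset.sum_congr rfl fun l _ => ?_
  split <;> simp

lemma S2_eq_sum_Tl {m : ℕ} (j : Fin m → ℕ) : S2 j = ∑ l : Fin m, Tl j l * Tl j l := by
  have key : ∑ l : Fin m, Tl j l * Tl j l = S2 j := by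
    calc ∑ l : Fin m, Tl j l * Tl j l
        = ∑ l : Fin m, ∑ r : Fin m, ∑ s : Fin m,
            (if l.1 ≤ r.1 ∧ l.1 ≤ s.1 then j r * j s else 0) := by
          refine Finset.sum_congr rfl fun l _ => ?_
          rw [Tl, Finset.sum_mul_sum]
          refine Finset.sum_congr rfl fun r _ => Finset.sum_congr rfl fun s _ => ?_
          split_ifs with h1 h2 h3 h4 <;> simp_all <;> omega
      _ = ∑ r : Fin m, ∑ l : Fin m, ∑ s : Fin m,
            (if l.1 ≤ r.1 ∧ l.1 ≤ s.1 then j r * j s else 0) := Finset.sum_comm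
      _ = ∑ r : Fin m, ∑ s : Fin m, ∑ l : Fin m,
            (if l.1 ≤ r.1 ∧ l.1 ≤ s.1 then j r * j s else 0) :=
          Finset.sum_congr rfl fun r _ => Finset.sum_comm
      _ = S2 j := by
          simp only [S2]
          refine Finset.sum_congr rfl fun r _ => Finset.sum_congr rfl fun s _ => ?_
          have h1 : ∀ l : Fin m, (if l.1 ≤ r.1 ∧ l.1 ≤ s.1 then j r * j s else 0)
              = (if l.1 ≤ min r.1 s.1 then 1 else 0) * (j r * j s) := by
            intro l
            rcases le_or_gt l.1 (min r.1 s.1) with h | h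
            · rw [if_pos (by omega), if_pos (by omega), one_mul]
            · rw [if_neg (by omega), if_neg (by omega), zero_mul]
          rw [Finset.sum_congr rfl fun l _ => h1 l, ← Finset.sum_mul]
          rw [Fin.sum_univ_eq_sum_range (fun i => if i ≤ min r.1 s.1 then 1 else 0)]
          rw [sum_ite_le m (min r.1 s.1) (by have := r.2; omega)]
          have : min r.1 s.1 + 1 = min (r.1+1) (s.1+1) := by omega
          rw [this, mul_assoc]
  exact key.symm

lemma Tl_ge {m : ℕ} (j : Fin m → ℕ) (hj : ∀ r, 2 ≤ j r) (l : Fin m) : 2 ≤ Tl j l := by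
  unfold Tl
  calc 2 ≤ (if l.1 ≤ l.1 then j l else 0) := by simp [hj l]
  _ ≤ _ := Finset.single_le_sum (f := fun r => if l.1 ≤ r.1 then j r else 0)
      (fun r _ => Nat.zero_le _) (Finset.mem_univ l)

lemma part1 (m : ℕ) (j : Fin m → ℕ) (hj : ∀ r, 2 ≤ j r) :
    2 * m ≤ S1 j ∧ ∃ e : ℕ, S2 j + 6 * m = 2 * e + 5 * S1 j := by
  constructor
  · rw [S1_eq_sum_Tl]
    calc 2 * m = ∑ _l : Fin m, 2 := by simp [mul_comm]
    _ ≤ _ := Finset.sum_le_sum fun l _ => Tl_ge j hj l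
  · refine ⟨∑ l : Fin m, (Tl j l - 2) * (Tl j l - 3) / 2, ?_⟩
    rw [S1_eq_sum_Tl, S2_eq_sum_Tl, Finset.mul_sum, Finset.mul_sum,
      ← Finset.sum_add_distrib]
    have h6 : 6 * m = ∑ _l : Fin m, 6 := by simp [mul_comm]
    rw [h6, ← Finset.sum_add_distrib]
    refine Finset.sum_congr rfl fun l _ => ?_
    have h2 := Tl_ge j hj l
    obtain ⟨u, hu⟩ : ∃ u, Tl j l = u + 2 := ⟨Tl j l - 2, by omega⟩
    rw [hu]
    have hsub : (u + 2 - 2) * (u + 2 - 3) / 2 = u * (u - 1) / 2 := by congr 1 <;> omega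
    rw [hsub]
    have heven : 2 * (u * (u - 1) / 2) = u * (u - 1) := by
      have : 2 ∣ u * (u - 1) := by
        rcases Nat.even_or_odd u with h | h
        · exact Dvd.dvd.mul_right h.two_dvd _
        · exact Dvd.dvd.mul_left (by rcases h with ⟨k, hk⟩; omega) u
      omega
    rw [heven]
    rcases u with _ | v
    · norm_num
    · have : v + 1 - 1 = v := by omega
      rw [this]; ring

lemma S1_snoc (n : ℕ) (g : Fin n → ℕ) (x : ℕ) :
    S1 (Fin.snoc g x : Fin (n+1) → ℕ) = S1 g + (n+1) * x := by
  simp only [S1, Fin.sum_univ_castSucc, Fin.snoc_castSucc, Fin.snoc_last,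
    Fin.coe_castSucc, Fin.val_last]

lemma S2_snoc (n : ℕ) (g : Fin n → ℕ) (x : ℕ) :
    S2 (Fin.snoc g x : Fin (n+1) → ℕ) = S2 g + 2 * (x * S1 g) + (n+1) * (x*x) := by
  simp only [S2, S1, Fin.sum_univ_castSucc, Fin.snoc_castSucc, Fin.snoc_last,
    Fin.coe_castSucc, Fin.val_last]
  have hmin : ∀ r : Fin n, min (r.1 + 1) (n + 1) = r.1 + 1 := by
    intro r; have := r.2; omega
  have hmin' : ∀ r : Fin n, min (n + 1) (r.1 + 1) = r.1 + 1 := by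
    intro r; have := r.2; omega
  simp only [hmin, hmin', min_self]
  rw [Finset.sum_add_distrib]
  have h1 : ∑ r : Fin n, (r.1 + 1) * g r * x = x * ∑ r : Fin n, (r.1+1) * g r := by
    rw [Finset.mul_sum]; exact Finset.sum_congr rfl fun r _ => by ring
  have h2 : ∑ s : Fin n, (s.1 + 1) * x * g s = x * ∑ r : Fin n, (r.1+1) * g r := by
    rw [Finset.mul_sum]; exact Finset.sum_congr rfl fun r _ => by ring
  rw [h1, h2]; ring

lemma S1_init (n : ℕ) (j : Fin (n+1) → ℕ) :
    S1 j = S1 (Fin.init j) + (n+1) * j (Fin.last n) := by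
  conv_lhs => rw [← Fin.snoc_init_self j]
  rw [S1_snoc]

lemma S2_init (n : ℕ) (j : Fin (n+1) → ℕ) :
    S2 j = S2 (Fin.init j) + 2 * (j (Fin.last n) * S1 (Fin.init j))
      + (n+1) * (j (Fin.last n) * j (Fin.last n)) := by
  conv_lhs => rw [← Fin.snoc_init_self j]
  rw [S2_snoc]

/-- the finset of tuples in the statement -/
noncomputable def A (m a c : ℕ) : Finset (Fin m → ℕ) :=
  (Fintype.piFinset (fun _ : Fin m => Finset.Icc 2 (c + 2 * m))).filter
    (fun j : Fin m → ℕ => S1 j = c + 2 * m ∧ S2 j + 6 * m = 2 * a + 5 * S1 j)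

lemma le_S1 {m : ℕ} (j : Fin m → ℕ) (r : Fin m) : j r ≤ S1 j := by
  calc j r ≤ (r.1 + 1) * j r := Nat.le_mul_of_pos_left _ (by omega)
  _ ≤ S1 j := Finset.single_le_sum (f := fun r : Fin m => (r.1+1) * j r)
      (fun _ _ => Nat.zero_le _) (Finset.mem_univ r)

lemma mem_A {m a c : ℕ} {j : Fin m → ℕ} :
    j ∈ A m a c ↔ (∀ r, 2 ≤ j r) ∧ S1 j = c + 2 * m ∧ S2 j + 6 * m = 2 * a + 5 * S1 j := by
  simp only [A, Finset.mem_filter, Fintype.mem_piFinset, Finset.mem_Icc]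
  constructor
  · rintro ⟨h1, h2⟩; exact ⟨fun r => (h1 r).1, h2⟩
  · rintro ⟨h1, h2, h3⟩
    exact ⟨fun r => ⟨h1 r, h2 ▸ le_S1 j r⟩, h2, h3⟩

noncomputable def Nc (m a c : ℕ) : ℕ := (A m a c).card

lemma arithL1_fwd (n a c P Q x e : ℕ) (hx : 3 ≤ x) (hP : 2*n ≤ P)
    (hS1 : P + (n+1)*x = c + 2*(n+1))
    (hS2 : (Q + 2*(x*P) + (n+1)*(x*x)) + 6*(n+1) = 2*a + 5*(c + 2*(n+1)))
    (he : (Q + 2*((x-1)*P) + (n+1)*((x-1)*(x-1))) + 6*(n+1)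
      = 2*e + 5*(P + (n+1)*(x-1))) :
    (n+1 ≤ c ∧ c - (n+1) ≤ a) ∧
    P + (n+1)*(x-1) = (c - (n+1)) + 2*(n+1) ∧
    (Q + 2*((x-1)*P) + (n+1)*((x-1)*(x-1))) + 6*(n+1)
      = 2*(a - (c - (n+1))) + 5*(P + (n+1)*(x-1)) := by
  obtain ⟨y, rfl⟩ : ∃ y, x = y + 1 := ⟨x - 1, by omega⟩
  have hy : 2 ≤ y := by omega
  simp only [Nat.add_sub_cancel] at he ⊢
  have hw2 : (n+1)*2 ≤ (n+1)*y := Nat.mul_le_mul_left (n+1) hy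
  have h1 : (y+1)*P = y*P + P := by ring
  have h2 : (n+1)*((y+1)*(y+1)) = (n+1)*(y*y) + 2*((n+1)*y) + (n+1) := by ring
  have h3 : (n+1)*(y+1) = (n+1)*y + (n+1) := by ring
  rw [h3] at hS1
  rw [h1, h2] at hS2
  set u := y*P with hu
  set v := (n+1)*(y*y) with hv
  set w := (n+1)*y with hw
  clear_value u v w
  clear hu hv hw h1 h2 h3
  omega

lemma arithL1_bwd (n a c P Q x' : ℕ) (hc : n+1 ≤ c) (ha : c - (n+1) ≤ a) (hx' : 2 ≤ x')
    (hS1 : P + (n+1)*x' = (c - (n+1)) + 2*(n+1))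
    (hS2 : (Q + 2*(x'*P) + (n+1)*(x'*x')) + 6*(n+1)
      = 2*(a - (c-(n+1))) + 5*((c - (n+1)) + 2*(n+1))) :
    P + (n+1)*(x'+1) = c + 2*(n+1) ∧
    (Q + 2*((x'+1)*P) + (n+1)*((x'+1)*(x'+1))) + 6*(n+1)
      = 2*a + 5*(P + (n+1)*(x'+1)) := by
  have h1 : (x'+1)*P = x'*P + P := by ring
  have h2 : (n+1)*((x'+1)*(x'+1)) = (n+1)*(x'*x') + 2*((n+1)*x') + (n+1) := by ring
  have h3 : (n+1)*(x'+1) = (n+1)*x' + (n+1) := by ring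
  rw [h1, h2, h3]
  set u := x'*P with hu
  set v := (n+1)*(x'*x') with hv
  set w := (n+1)*x' with hw
  clear_value u v w
  clear hu hv hw h1 h2 h3
  omega

lemma init_entries {n : ℕ} {j : Fin (n+1) → ℕ} (h : ∀ r, 2 ≤ j r) :
    ∀ r, 2 ≤ Fin.init j r := fun r => h r.castSucc

lemma card_ne_two (n a c : ℕ) :
    ((A (n+1) a c).filter (fun j => ¬ j (Fin.last n) = 2)).card =
    if n+1 ≤ c ∧ c - (n+1) ≤ a then Nc (n+1) (a - (c - (n+1))) (c - (n+1)) else 0 := by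
  classical
  -- facts about any member of the filtered set
  have hfact : ∀ j ∈ (A (n+1) a c).filter (fun j => ¬ j (Fin.last n) = 2),
      (n+1 ≤ c ∧ c - (n+1) ≤ a) ∧
      Function.update j (Fin.last n) (j (Fin.last n) - 1)
        ∈ A (n+1) (a - (c - (n+1))) (c - (n+1)) := by
    intro j hjmem
    rw [Finset.mem_filter] at hjmem
    obtain ⟨hjA, hlast⟩ := hjmem
    rw [mem_A] at hjA
    obtain ⟨hent, hS1j, hS2j⟩ := hjA
    set x := j (Fin.last n) with hxdef
    have hx : 3 ≤ x := by have := hent (Fin.last n); omega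
    set j' := Function.update j (Fin.last n) (x - 1) with hj'def
    have hj'ent : ∀ r, 2 ≤ j' r := by
      intro r
      rw [hj'def, Function.update_apply]
      split
      · omega
      · exact hent r
    have hinit : Fin.init j' = Fin.init j := by
      rw [hj'def]; exact Fin.init_update_last _ _
    have hlast' : j' (Fin.last n) = x - 1 := Function.update_self _ _ _
    have hP := (part1 n (Fin.init j) (init_entries hent)).1
    obtain ⟨e, he⟩ := (part1 (n+1) j' hj'ent).2
    rw [S1_init n j'] at he
    rw [S2_init n j'] at he
    rw [hinit, hlast'] at he
    rw [S1_init n j] at hS1j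
    rw [S2_init n j, S1_init n j] at hS2j
    rw [← hxdef] at hS1j hS2j
    rw [hS1j] at hS2j
    obtain ⟨hcond, hA1, hA2⟩ := arithL1_fwd n a c (S1 (Fin.init j)) (S2 (Fin.init j)) x e
      hx hP hS1j hS2j he
    refine ⟨hcond, ?_⟩
    rw [mem_A]
    refine ⟨hj'ent, ?_, ?_⟩
    · rw [S1_init n j', hinit, hlast']; exact hA1
    · rw [S2_init n j', S1_init n j', hinit, hlast']; exact hA2
  by_cases h : n+1 ≤ c ∧ c - (n+1) ≤ a
  · rw [if_pos h, Nc]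
    apply Finset.card_nbij'
      (i := fun j => Function.update j (Fin.last n) (j (Fin.last n) - 1))
      (j := fun j' => Function.update j' (Fin.last n) (j' (Fin.last n) + 1))
    · intro j hj
      exact (hfact j hj).2
    · intro g hg
      rw [Finset.mem_coe] at hg ⊢
      beta_reduce
      rw [mem_A] at hg
      obtain ⟨hent, hS1g, hS2g⟩ := hg
      set x' := g (Fin.last n) with hx'def
      have hx' : 2 ≤ x' := hent _
      set j := Function.update g (Fin.last n) (x' + 1) with hjdef
      have hjent : ∀ r, 2 ≤ j r := by
        intro r
        rw [hjdef, Function.update_apply]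
        split
        · omega
        · exact hent r
      have hinit : Fin.init j = Fin.init g := by
        rw [hjdef]; exact Fin.init_update_last _ _
      have hlast' : j (Fin.last n) = x' + 1 := Function.update_self _ _ _
      rw [S1_init n g] at hS1g
      rw [S2_init n g, S1_init n g] at hS2g
      rw [← hx'def] at hS1g hS2g
      rw [hS1g] at hS2g
      obtain ⟨hB1, hB2⟩ := arithL1_bwd n a c (S1 (Fin.init g)) (S2 (Fin.init g)) x'
        h.1 h.2 hx' hS1g hS2g
      rw [Finset.mem_filter, mem_A]
      refine ⟨⟨hjent, ?_, ?_⟩, ?_⟩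
      · rw [S1_init n j, hinit, hlast']; exact hB1
      · rw [S2_init n j, S1_init n j, hinit, hlast']; exact hB2
      · rw [hlast']; omega
    · intro j hj
      beta_reduce
      rw [Finset.mem_coe, Finset.mem_filter, mem_A] at hj
      have hx : 3 ≤ j (Fin.last n) := by have := hj.1.1 (Fin.last n); have := hj.2; omega
      rw [Function.update_idem, Function.update_self]
      have : j (Fin.last n) - 1 + 1 = j (Fin.last n) := by omega
      rw [this, Function.update_eq_self]
    · intro g hg
      beta_reduce
      rw [Function.update_idem, Function.update_self, Nat.add_sub_cancel,
        Function.update_eq_self]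
  · rw [if_neg h]
    rw [Finset.card_eq_zero, Finset.eq_empty_iff_forall_notMem]
    intro j hj
    exact h (hfact j hj).1

lemma card_eq_two (n a c : ℕ) :
    ((A (n+1) a c).filter (fun j => j (Fin.last n) = 2)).card =
    if 2*n ≤ c ∧ n ≤ a ∧ 2*(c-2*n) ≤ a - n then Nc n (a - n - 2*(c-2*n)) (c - 2*n) else 0 := by
  classical
  have hfact : ∀ j ∈ (A (n+1) a c).filter (fun j => j (Fin.last n) = 2),
      (2*n ≤ c ∧ n ≤ a ∧ 2*(c-2*n) ≤ a - n) ∧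
      Fin.init j ∈ A n (a - n - 2*(c-2*n)) (c - 2*n) := by
    intro j hjmem
    rw [Finset.mem_filter] at hjmem
    obtain ⟨hjA, hlast⟩ := hjmem
    rw [mem_A] at hjA
    obtain ⟨hent, hS1j, hS2j⟩ := hjA
    have hgent := init_entries hent
    have hP := (part1 n (Fin.init j) hgent).1
    obtain ⟨e, he⟩ := (part1 n (Fin.init j) hgent).2
    rw [S1_init n j, hlast] at hS1j
    rw [S2_init n j, S1_init n j, hlast] at hS2j
    rw [hS1j] at hS2j
    have hgoal : (2*n ≤ c ∧ n ≤ a ∧ 2*(c-2*n) ≤ a - n) ∧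
        S1 (Fin.init j) = (c - 2*n) + 2*n ∧
        S2 (Fin.init j) + 6*n = 2*(a - n - 2*(c-2*n)) + 5*S1 (Fin.init j) := by
      omega
    exact ⟨hgoal.1, mem_A.2 ⟨hgent, hgoal.2.1, hgoal.2.2⟩⟩
  by_cases h : 2*n ≤ c ∧ n ≤ a ∧ 2*(c-2*n) ≤ a - n
  · rw [if_pos h, Nc]
    apply Finset.card_nbij' (i := fun j => Fin.init j) (j := fun g => Fin.snoc g 2)
    · intro j hj
      exact (hfact j hj).2
    · intro g hg
      rw [Finset.mem_coe] at hg ⊢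
      beta_reduce
      rw [mem_A] at hg
      obtain ⟨hent, hS1g, hS2g⟩ := hg
      have hjent : ∀ r : Fin (n+1), 2 ≤ (Fin.snoc g 2 : Fin (n+1) → ℕ) r := by
        intro r
        induction r using Fin.lastCases with
        | last => rw [Fin.snoc_last]
        | cast r => rw [Fin.snoc_castSucc]; exact hent r
      rw [Finset.mem_filter, mem_A]
      refine ⟨⟨hjent, ?_, ?_⟩, Fin.snoc_last _ _⟩
      · rw [S1_snoc]; omega
      · rw [S2_snoc, S1_snoc]; omega
    · intro j hj
      beta_reduce
      rw [Finset.mem_coe, Finset.mem_filter] at hj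
      rw [← hj.2]
      exact Fin.snoc_init_self j
    · intro g _
      exact Fin.init_snoc _ _
  · rw [if_neg h]
    rw [Finset.card_eq_zero, Finset.eq_empty_iff_forall_notMem]
    intro j hj
    exact h (hfact j hj).1

lemma key_s14 (n a c : ℕ) : Nc (n+1) a c =
    (if n+1 ≤ c ∧ c - (n+1) ≤ a then Nc (n+1) (a - (c - (n+1))) (c - (n+1)) else 0) +
    (if 2*n ≤ c ∧ n ≤ a ∧ 2*(c-2*n) ≤ a - n then Nc n (a - n - 2*(c-2*n)) (c - 2*n) else 0) := by
  classical
  rw [Nc, ← Finset.card_filter_add_card_filter_not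
    (s := A (n+1) a c) (fun j => j (Fin.last n) = 2),
    card_ne_two, card_eq_two, Nat.add_comm]

lemma Nc_zero (a c : ℕ) : Nc 0 a c = if a = 0 ∧ c = 0 then 1 else 0 := by
  classical
  have hS1 : ∀ j : Fin 0 → ℕ, S1 j = 0 := fun j => by simp [S1]
  have hS2 : ∀ j : Fin 0 → ℕ, S2 j = 0 := fun j => by simp [S2]
  rw [Nc, A]
  by_cases h : a = 0 ∧ c = 0
  · rw [if_pos h]
    obtain ⟨rfl, rfl⟩ := h
    rw [Finset.filter_true_of_mem (fun j _ => by simp [hS1, hS2])]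
    rw [Fintype.card_piFinset]
    simp
  · rw [if_neg h]
    rw [Finset.card_eq_zero, Finset.eq_empty_iff_forall_notMem]
    intro j hj
    rw [Finset.mem_filter] at hj
    have h1 := hS1 j
    have h2 := hS2 j
    have := hj.2
    omega

noncomputable def cf (F : MvPowerSeries (Fin 2) ℤ) (a c : ℕ) : ℤ :=
  MvPowerSeries.coeff (R := ℤ) (Finsupp.single 0 a + Finsupp.single 1 c) F

lemma d2_apply0 (a c : ℕ) :
    ((Finsupp.single (0 : Fin 2) a + Finsupp.single 1 c : Fin 2 →₀ ℕ)) 0 = a := by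
  simp [Finsupp.single_apply]

lemma d2_apply1 (a c : ℕ) :
    ((Finsupp.single (0 : Fin 2) a + Finsupp.single 1 c : Fin 2 →₀ ℕ)) 1 = c := by
  simp [Finsupp.single_apply]

lemma d2_le (k a c : ℕ) :
    Finsupp.single (1 : Fin 2) k ≤ Finsupp.single 0 a + Finsupp.single 1 c ↔ k ≤ c := by
  rw [Finsupp.le_def]
  constructor
  · intro h
    have := h 1
    simpa [Finsupp.single_apply] using this
  · intro h i
    fin_cases i <;> simp [Finsupp.single_apply] <;> omega

lemma d2_le' (k l a c : ℕ) :
    Finsupp.single (1 : Fin 2) k + Finsupp.single 0 l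
      ≤ Finsupp.single 0 a + Finsupp.single 1 c ↔ k ≤ c ∧ l ≤ a := by
  rw [Finsupp.le_def]
  constructor
  · intro h
    have h1 := h 1
    have h0 := h 0
    simp [Finsupp.single_apply] at h1 h0
    exact ⟨h1, h0⟩
  · rintro ⟨h1, h0⟩ i
    fin_cases i <;> simp [Finsupp.single_apply] <;> omega

lemma d2_sub (k a c : ℕ) :
    (Finsupp.single (0 : Fin 2) a + Finsupp.single 1 c) - Finsupp.single 1 k
      = Finsupp.single 0 a + Finsupp.single 1 (c - k) := by
  ext i
  rw [Finsupp.tsub_apply]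
  fin_cases i <;> simp [Finsupp.single_apply]

lemma d2_sub' (k l a c : ℕ) :
    (Finsupp.single (0 : Fin 2) a + Finsupp.single 1 c)
        - (Finsupp.single 1 k + Finsupp.single 0 l)
      = Finsupp.single 0 (a - l) + Finsupp.single 1 (c - k) := by
  ext i
  rw [Finsupp.tsub_apply]
  fin_cases i <;> simp [Finsupp.single_apply]

lemma cf_substT (k : ℕ) (F : MvPowerSeries (Fin 2) ℤ) (a c : ℕ) :
    cf (substT k F) a c = if k * c ≤ a then cf F (a - k * c) c else 0 := by
  simp only [cf, MvPowerSeries.coeff_apply, substT, d2_apply0, d2_apply1]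

lemma cf_X1pow_mul (k : ℕ) (F : MvPowerSeries (Fin 2) ℤ) (a c : ℕ) :
    cf (MvPowerSeries.X 1 ^ k * F) a c = if k ≤ c then cf F a (c - k) else 0 := by
  rw [cf, MvPowerSeries.X_pow_eq, MvPowerSeries.coeff_monomial_mul]
  by_cases h : k ≤ c
  · rw [if_pos ((d2_le k a c).2 h), if_pos h, one_mul, d2_sub, cf]
  · rw [if_neg (fun hh => h ((d2_le k a c).1 hh)), if_neg h]

lemma cf_X1X0pow_mul (k l : ℕ) (F : MvPowerSeries (Fin 2) ℤ) (a c : ℕ) :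
    cf (MvPowerSeries.X 1 ^ k * MvPowerSeries.X 0 ^ l * F) a c
      = if k ≤ c ∧ l ≤ a then cf F (a - l) (c - k) else 0 := by
  rw [cf, MvPowerSeries.X_pow_eq, MvPowerSeries.X_pow_eq,
    MvPowerSeries.monomial_mul_monomial, MvPowerSeries.coeff_monomial_mul]
  by_cases h : k ≤ c ∧ l ≤ a
  · rw [if_pos ((d2_le' k l a c).2 h), if_pos h, one_mul, one_mul, d2_sub', cf]
  · rw [if_neg (fun hh => h ((d2_le' k l a c).1 hh)), if_neg h]

lemma cf_sub (F G : MvPowerSeries (Fin 2) ℤ) (a c : ℕ) :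
    cf (F - G) a c = cf F a c - cf G a c := map_sub _ _ _

lemma cf_one (a c : ℕ) : cf 1 a c = if a = 0 ∧ c = 0 then 1 else 0 := by
  rw [cf, MvPowerSeries.coeff_one]
  by_cases h : a = 0 ∧ c = 0
  · obtain ⟨rfl, rfl⟩ := h
    simp
  · rw [if_neg h, if_neg]
    intro heq
    have h0 := DFunLike.congr_fun heq 0
    have h1 := DFunLike.congr_fun heq 1
    rw [d2_apply0] at h0
    rw [d2_apply1] at h1
    simp at h0 h1
    exact h ⟨h0, h1⟩

lemma coeff_Bser (φ : ℕ → MvPowerSeries (Fin 2) ℤ) (a m c : ℕ) :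
    MvPowerSeries.coeff (R := ℤ)
        (Finsupp.single 0 a + Finsupp.single 1 m + Finsupp.single 2 c) (Bser φ)
      = cf (φ m) a c := by
  rw [MvPowerSeries.coeff_apply, Bser, cf]
  have h0 : ((Finsupp.single (0 : Fin 3) a + Finsupp.single 1 m + Finsupp.single 2 c : Fin 3 →₀ ℕ)) 0 = a := by
    simp [Finsupp.single_apply]
  have h1 : ((Finsupp.single (0 : Fin 3) a + Finsupp.single 1 m + Finsupp.single 2 c : Fin 3 →₀ ℕ)) 1 = m := by
    simp [Finsupp.single_apply]
  have h2 : ((Finsupp.single (0 : Fin 3) a + Finsupp.single 1 m + Finsupp.single 2 c : Fin 3 →₀ ℕ)) 2 = c := by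
    simp [Finsupp.single_apply]
  rw [h0, h1, h2]

lemma main_lemma (φ : ℕ → MvPowerSeries (Fin 2) ℤ) (hφ0 : φ 0 = 1)
    (hφ : ∀ m : ℕ, 1 ≤ m →
      φ m = (MvPowerSeries.X 1) ^ m * substT 1 (φ m) -
        (MvPowerSeries.X 1) ^ (2 * m - 2) * (MvPowerSeries.X 0) ^ (m - 1) *
          substT 2 (φ (m - 1))) :
    ∀ m c a : ℕ, cf (φ m) a c = (-1 : ℤ) ^ m * (Nc m a c : ℤ) := by
  intro m
  induction m with
  | zero =>
    intro c a
    rw [hφ0, cf_one, Nc_zero]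
    split_ifs <;> simp
  | succ n ih =>
    intro c
    induction c using Nat.strong_induction_on with
    | _ c ihc =>
    intro a
    have hrec := hφ (n+1) (by omega)
    have e1 : 2*(n+1) - 2 = 2*n := by omega
    have e2 : (n+1) - 1 = n := by omega
    rw [e1, e2] at hrec
    have hT1 : cf (MvPowerSeries.X 1 ^ (n+1) * substT 1 (φ (n+1))) a c
        = (if n+1 ≤ c ∧ c - (n+1) ≤ a then
            (-1 : ℤ)^(n+1) * (Nc (n+1) (a - (c-(n+1))) (c-(n+1)) : ℤ) else 0) := by
      rw [cf_X1pow_mul]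
      by_cases h1 : n+1 ≤ c
      · rw [if_pos h1, cf_substT]
        simp only [one_mul]
        by_cases h2 : c - (n+1) ≤ a
        · rw [if_pos h2, if_pos ⟨h1, h2⟩, ihc (c - (n+1)) (by omega)]
        · rw [if_neg h2, if_neg (by tauto)]
      · rw [if_neg h1, if_neg (by tauto)]
    have hT2 : cf (MvPowerSeries.X 1 ^ (2*n) * MvPowerSeries.X 0 ^ n * substT 2 (φ n)) a c
        = (if 2*n ≤ c ∧ n ≤ a ∧ 2*(c-2*n) ≤ a - n then
            (-1 : ℤ)^n * (Nc n (a - n - 2*(c-2*n)) (c-2*n) : ℤ) else 0) := by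
      rw [cf_X1X0pow_mul]
      by_cases h1 : 2*n ≤ c ∧ n ≤ a
      · rw [if_pos h1, cf_substT]
        by_cases h2 : 2*(c-2*n) ≤ a - n
        · rw [if_pos h2, if_pos ⟨h1.1, h1.2, h2⟩, ih (c-2*n) (a - n - 2*(c-2*n))]
        · rw [if_neg h2, if_neg (by tauto)]
      · rw [if_neg h1, if_neg (by tauto)]
    rw [hrec, cf_sub, hT1, hT2]
    have hkeyZ : ((Nc (n+1) a c : ℤ))
        = (if n+1 ≤ c ∧ c-(n+1) ≤ a then (Nc (n+1) (a-(c-(n+1))) (c-(n+1)) : ℤ) else 0)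
          + (if 2*n ≤ c ∧ n ≤ a ∧ 2*(c-2*n) ≤ a - n then
              (Nc n (a-n-2*(c-2*n)) (c-2*n) : ℤ) else 0) := by
      rw [key_s14 n a c]
      push_cast
      split_ifs <;> simp
    rw [hkeyZ]
    split_ifs <;> ring

/-- Let `B(q,z,t) = Σ_{m≥0} φ_m(q,t) z^m` where `φ₀ = 1` and, for `m ≥ 1`,
`φ_m(q,t) = t^m·φ_m(q,qt) - t^{2m-2}·q^{m-1}·φ_{m-1}(q,tq²)`.  Then
`B(q,z,t) = 1 + Σ_{m≥1} (-1)^m z^m Σ_{j₁,…,j_m≥2}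
  t^{(Σ r·j_r)-2m} · q^{(Σ min(r,s)·j_r·j_s - 5·Σ r·j_r)/2 + 3m}`.
First conjunct: all exponents occurring are nonnegative integers, i.e. for
every tuple `j` with all entries `≥ 2` the `t`-exponent `S1 j - 2m` is a
nonnegative integer and the `q`-exponent `e = (S2 j - 5·S1 j)/2 + 3m` is a
nonnegative integer (`S2 j + 6m = 2e + 5·S1 j`).  Second conjunct: the
coefficient of `q^a z^m t^c` in `B` is `1` at `a = m = c = 0`, is `0` for
`m = 0, (a,c) ≠ (0,0)`, and for `m ≥ 1` equals `(-1)^m` times the number of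
tuples `(j₁,…,j_m)` with all `j_r ≥ 2` whose associated monomial is
`q^a t^c` (all such tuples satisfy `j_r ≤ c + 2m`, so only finitely many
tuples contribute to any fixed monomial). -/
theorem stmt14 (φ : ℕ → MvPowerSeries (Fin 2) ℤ) (hφ0 : φ 0 = 1)
    (hφ : ∀ m : ℕ, 1 ≤ m →
      φ m = (MvPowerSeries.X 1) ^ m * substT 1 (φ m) -
        (MvPowerSeries.X 1) ^ (2 * m - 2) * (MvPowerSeries.X 0) ^ (m - 1) *
          substT 2 (φ (m - 1))) :
    (∀ m : ℕ, 1 ≤ m → ∀ j : Fin m → ℕ, (∀ r, 2 ≤ j r) →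
      2 * m ≤ S1 j ∧ ∃ e : ℕ, S2 j + 6 * m = 2 * e + 5 * S1 j) ∧
    (∀ a m c : ℕ,
      MvPowerSeries.coeff (R := ℤ)
          (Finsupp.single 0 a + Finsupp.single 1 m + Finsupp.single 2 c)
          (Bser φ) =
        if m = 0 then (if a = 0 ∧ c = 0 then 1 else 0)
        else
          (-1 : ℤ) ^ m *
            (((Fintype.piFinset (fun _ : Fin m => Finset.Icc 2 (c + 2 * m))).filter
              (fun j : Fin m → ℕ =>
                S1 j = c + 2 * m ∧
                S2 j + 6 * m = 2 * a + 5 * S1 j)).card : ℤ)) := by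
  constructor
  · intro m _ j hj
    exact part1 m j hj
  · intro a m c
    rw [coeff_Bser, main_lemma φ hφ0 hφ m c a]
    by_cases hm : m = 0
    · subst hm
      rw [if_pos rfl, Nc_zero]
      push_cast
      split_ifs <;> simp
    · rw [if_neg hm]
      rfl
end
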